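/- arXiv:2411.14609 — 7 statements merged into one kernel-verified Lean document; each statement's English description precedes it below -/
import Mathlib

section
/- Let J be a countable set and let μ = (μ_j)_{j∈J} be a family of nonzero complex numbers with ∑_{j∈J} 1/|μ_j| = +∞. Then for every ε > 0 there exists x: J → ℂ with finite support such that ∑_{j∈J} |x_j| = 1 and |x_j μ_j| < ε for all j ∈ J. -/
open scoped ENNReal NNReal

/-- If `μ : J → ℂ` is a family of nonzero scalars on a countable set with
`∑_j 1/|μ_j| = +∞`, then for every `ε > 0` there is a finitely supported `x : J → ℂ` with
`∑_j |x_j| = 1` and `|x_j μ_j| < ε` for all `j`. -/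
theorem stmt1 {J : Type*} [Countable J] (μ : J → ℂ) (hμ : ∀ j, μ j ≠ 0)
    (hdiv : ∑' j : J, (‖μ j‖₊ : ℝ≥0∞)⁻¹ = ⊤) :
    ∀ ε : ℝ, 0 < ε → ∃ x : J → ℂ,
      (Function.support x).Finite ∧ (∑' j : J, ‖x j‖) = 1 ∧ ∀ j : J, ‖x j * μ j‖ < ε := by
  intro ε hε
  classical
  -- find a finite set F with big partial sum
  have htop : (ENNReal.ofReal ε⁻¹) < ∑' j : J, (‖μ j‖₊ : ℝ≥0∞)⁻¹ := by
    rw [hdiv]; exact ENNReal.ofReal_lt_top.trans_le le_top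
  rw [ENNReal.tsum_eq_iSup_sum] at htop
  obtain ⟨F, hF⟩ := lt_iSup_iff.mp htop
  set S : ℝ := ∑ j ∈ F, (‖μ j‖)⁻¹ with hS
  have hnorm_pos : ∀ j, (0:ℝ) < ‖μ j‖ := fun j => norm_pos_iff.mpr (hμ j)
  have hsum_coe : (∑ j ∈ F, (‖μ j‖₊ : ℝ≥0∞)⁻¹) = ENNReal.ofReal S := by
    rw [hS, ENNReal.ofReal_sum_of_nonneg (fun j _ => by positivity)]
    refine Finset.sum_congr rfl fun j _ => ?_
    rw [ENNReal.ofReal_inv_of_pos (hnorm_pos j), ofReal_norm, enorm_eq_nnnorm]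
  rw [hsum_coe] at hF
  have hεinvS : ε⁻¹ < S := by
    have := (ENNReal.ofReal_lt_ofReal_iff_of_nonneg (by positivity)).mp hF
    exact this
  have hSpos : 0 < S := lt_trans (by positivity) hεinvS
  refine ⟨fun j => if j ∈ F then (((S * ‖μ j‖)⁻¹ : ℝ) : ℂ) else 0, ?_, ?_, ?_⟩
  · apply Set.Finite.subset F.finite_toSet
    intro j hj
    simp only [Function.mem_support] at hj
    by_contra h
    simp at hj
    exact h hj.1
  · have hzero : ∀ j ∉ F, ‖(if j ∈ F then (((S * ‖μ j‖)⁻¹ : ℝ) : ℂ) else 0)‖ = 0 := by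
      intro j hj; simp [hj]
    rw [tsum_eq_sum hzero]
    have : ∀ j ∈ F, ‖(if j ∈ F then (((S * ‖μ j‖)⁻¹ : ℝ) : ℂ) else 0)‖
        = S⁻¹ * (‖μ j‖)⁻¹ := by
      intro j hj
      have h1 : (0:ℝ) ≤ (S * ‖μ j‖)⁻¹ := by positivity
      rw [if_pos hj, Complex.norm_real, Real.norm_of_nonneg h1, mul_inv]
    rw [Finset.sum_congr rfl this, ← Finset.mul_sum, ← hS, inv_mul_cancel₀ hSpos.ne']
  · intro j
    by_cases hj : j ∈ F
    · have h1 : (0:ℝ) ≤ (S * ‖μ j‖)⁻¹ := by positivity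
      simp only [if_pos hj]
      rw [norm_mul, Complex.norm_real, Real.norm_of_nonneg h1, mul_inv,
        mul_assoc, inv_mul_cancel₀ (hnorm_pos j).ne', mul_one]
      exact (inv_lt_comm₀ hSpos hε).mpr hεinvS
    · simp [hj, hε]
end

section
/- Let d ≥ 1 and let P be a nonempty finite subset of ℕ₀^d \ {(0,…,0)}. For each α = (α₁,…,α_d) ∈ P define the linear map L_α : ℝ^d → ℝ by L_α(s) = ∑_{j=1}^d α_j s_j. Then there exist s ∈ (0,+∞)^d and β ∈ P such that L_β(s) = 1 and L_α(s) > 1 for all α ∈ P with α ≠ β. -/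
lemma base_inj (b : ℕ) : ∀ n (α β : Fin n → ℕ), (∀ j, α j < b) → (∀ j, β j < b) →
    (∑ j, α j * b ^ (j : ℕ)) = (∑ j, β j * b ^ (j : ℕ)) → α = β := by
  intro n
  induction n with
  | zero => intro α β _ _ _; funext j; exact j.elim0
  | succ n ih =>
    intro α β hα hβ h
    have hb : 0 < b := lt_of_le_of_lt (Nat.zero_le _) (hα 0)
    rw [Fin.sum_univ_succ, Fin.sum_univ_succ] at h
    have h1 : α 0 + (∑ j : Fin n, α j.succ * b ^ (j : ℕ)) * b
            = β 0 + (∑ j : Fin n, β j.succ * b ^ (j : ℕ)) * b := by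
      rw [Finset.sum_mul, Finset.sum_mul]
      simpa [Fin.val_succ, pow_succ, mul_assoc, mul_comm, mul_left_comm] using h
    have h0 : α 0 = β 0 := by
      have := congrArg (· % b) h1
      simpa [Nat.add_mul_mod_self_right, Nat.mod_eq_of_lt (hα 0),
        Nat.mod_eq_of_lt (hβ 0)] using this
    have h2 : (∑ j : Fin n, α j.succ * b ^ (j : ℕ))
            = (∑ j : Fin n, β j.succ * b ^ (j : ℕ)) := by
      have := h1
      rw [h0] at this
      exact Nat.eq_of_mul_eq_mul_right hb (Nat.add_left_cancel this)
    have htail : (fun j : Fin n => α j.succ) = (fun j : Fin n => β j.succ) :=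
      ih _ _ (fun j => hα j.succ) (fun j => hβ j.succ) h2
    funext j
    refine Fin.cases h0 (fun i => ?_) j
    exact congrFun htail i

/-- For `d ≥ 1` and a nonempty finite set `P` of multi-indices in
`ℕ₀^d \ {0}`, there are `s ∈ (0,∞)^d` and `β ∈ P` with `L_β(s) = 1` and `L_α(s) > 1`
for every other `α ∈ P`, where `L_α(s) = ∑_j α_j s_j`. -/
theorem stmt2 (d : ℕ) (hd : 1 ≤ d) (P : Finset (Fin d → ℕ)) (hP : P.Nonempty)
    (h0 : (fun _ => 0) ∉ P) :
    ∃ s : Fin d → ℝ, (∀ j, 0 < s j) ∧ ∃ β ∈ P,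
      (∑ j, (β j : ℝ) * s j) = 1 ∧
      ∀ α ∈ P, α ≠ β → 1 < ∑ j, (α j : ℝ) * s j := by
  classical
  set b : ℕ := (P.sup fun α => Finset.univ.sup α) + 1 with hb
  have hbnd : ∀ α ∈ P, ∀ j, α j < b := by
    intro α hα j
    have : α j ≤ P.sup fun α => Finset.univ.sup α :=
      le_trans (Finset.le_sup (Finset.mem_univ j)) (Finset.le_sup hα)
    omega
  -- natural-valued evaluation
  set f : (Fin d → ℕ) → ℕ := fun α => ∑ j, α j * b ^ (j : ℕ) with hf
  obtain ⟨β, hβP, hmin⟩ := P.exists_min_image f hP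
  -- β is nonzero
  have hβne : ∃ j, β j ≠ 0 := by
    by_contra hc
    push_neg at hc
    have hβ0 : β = fun _ => 0 := funext hc
    exact h0 (hβ0 ▸ hβP)
  obtain ⟨j0, hj0⟩ := hβne
  have hfβpos : 0 < f β := by
    apply Finset.sum_pos'
    · intro i _; exact Nat.zero_le _
    · exact ⟨j0, Finset.mem_univ _, Nat.mul_pos (Nat.pos_of_ne_zero hj0)
        (Nat.pow_pos (by omega))⟩
  set c : ℝ := (f β : ℝ) with hc
  have hcpos : 0 < c := by rw [hc]; exact_mod_cast hfβpos
  refine ⟨fun j => (b : ℝ) ^ (j : ℕ) / c, ?_, β, hβP, ?_, ?_⟩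
  · intro j
    apply div_pos _ hcpos
    apply pow_pos
    exact_mod_cast Nat.succ_pos _
  · have : (∑ j, (β j : ℝ) * ((b : ℝ) ^ (j : ℕ) / c)) = (f β : ℝ) / c := by
      rw [hf]
      push_cast
      rw [Finset.sum_div]
      congr 1; funext j; ring
    rw [this, hc, div_self (ne_of_gt hcpos)]
  · intro α hαP hαβ
    have hlt : f β < f α := by
      rcases lt_or_eq_of_le (hmin α hαP) with h | h
      · exact h
      · exact absurd (base_inj b d α β (hbnd α hαP) (hbnd β hβP) h.symm) hαβ
    have : (∑ j, (α j : ℝ) * ((b : ℝ) ^ (j : ℕ) / c)) = (f α : ℝ) / c := by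
      rw [hf]
      push_cast
      rw [Finset.sum_div]
      congr 1; funext j; ring
    rw [this]
    rw [lt_div_iff₀ hcpos, one_mul, hc]
    exact_mod_cast hlt
end

section
/- Let T be a continuous linear operator on a separable F-algebra X. Suppose that for every integer m ≥ 1 and every pair (U, V) of nonempty open subsets of X, there exist u ∈ U and N ∈ ℕ such that T^N(u^m) ∈ V. Then there exists a residual subset 𝒜 of X such that for every x ∈ 𝒜 and every m ≥ 1, the vector x^m is hypercyclic for T. -/
open Filter Topology

/-- Let `T` be a continuous linear operator on a separable F-algebra `X`
(a separable, completely metrizable — hence Baire — topological algebra). If for every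
`m ≥ 1` and every pair `(U, V)` of nonempty open sets there are `u ∈ U` and `N` with
`T^N(u^m) ∈ V`, then there is a residual set `𝒜 ⊆ X` such that `x^m` is hypercyclic for
`T` for every `x ∈ 𝒜` and every `m ≥ 1`. -/
theorem stmt3 {X : Type*} [TopologicalSpace X] [CommRing X] [IsTopologicalRing X]
    [Algebra ℂ X] [TopologicalSpace.MetrizableSpace X] [BaireSpace X]
    [TopologicalSpace.SeparableSpace X]
    (T : X →L[ℂ] X)
    (h : ∀ m : ℕ, 1 ≤ m → ∀ U V : Set X, IsOpen U → U.Nonempty → IsOpen V → V.Nonempty →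
      ∃ u ∈ U, ∃ N : ℕ, (T ^ N) (u ^ m) ∈ V) :
    ∃ 𝒜 ∈ residual X, ∀ x ∈ 𝒜, ∀ m : ℕ, 1 ≤ m →
      Dense (Set.range fun n : ℕ => (T ^ n) (x ^ m)) := by
  letI : MetricSpace X := TopologicalSpace.metrizableSpaceMetric X
  haveI : SecondCountableTopology X := UniformSpace.secondCountable_of_separable X
  set B := TopologicalSpace.countableBasis X with hB
  have hbasis := TopologicalSpace.isBasis_countableBasis X
  -- the open dense sets
  have key : ∀ m : ℕ, ∀ V ∈ B, V.Nonempty →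
      {x : X | ∃ n : ℕ, (T ^ n) (x ^ (m + 1)) ∈ V} ∈ residual X := by
    intro m V hV hVne
    have hVopen : IsOpen V := TopologicalSpace.isOpen_of_mem_countableBasis hV
    have hcont : ∀ n : ℕ, Continuous fun x : X => (T ^ n) (x ^ (m + 1)) := fun n =>
      (T ^ n).continuous.comp (continuous_pow (m + 1))
    apply residual_of_dense_open
    · have : {x : X | ∃ n : ℕ, (T ^ n) (x ^ (m + 1)) ∈ V} =
          ⋃ n : ℕ, (fun x : X => (T ^ n) (x ^ (m + 1))) ⁻¹' V := by
        ext x; simp [Set.mem_iUnion]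
      rw [this]
      exact isOpen_iUnion fun n => (hVopen.preimage (hcont n))
    · rw [dense_iff_inter_open]
      intro U hU hUne
      obtain ⟨u, hu, N, hN⟩ := h (m + 1) (Nat.le_add_left 1 m) U V hU hUne hVopen hVne
      exact ⟨u, hu, ⟨N, hN⟩⟩
  refine ⟨⋂ m : ℕ, ⋂ V ∈ B, ⋂ _ : V.Nonempty, {x : X | ∃ n : ℕ, (T ^ n) (x ^ (m + 1)) ∈ V},
    ?_, ?_⟩
  · refine countable_iInter_mem.2 fun m => ?_
    refine (countable_bInter_mem (TopologicalSpace.countable_countableBasis X)).2 fun V hV => ?_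
    refine countable_iInter_mem.2 fun hVne => key m V hV hVne
  · intro x hx m hm
    obtain ⟨k, rfl⟩ : ∃ k, m = k + 1 := ⟨m - 1, (Nat.succ_pred_eq_of_pos hm).symm⟩
    rw [hbasis.dense_iff]
    intro V hV hVne
    simp only [Set.mem_iInter] at hx
    obtain ⟨n, hn⟩ := hx k V hV hVne
    exact ⟨(T ^ n) (x ^ (k + 1)), hn, ⟨n, rfl⟩⟩
end

section
/- Let A be a rooted directed tree, let 1 ≤ p < ∞, and let λ = (λ_u)_{u∈A} be a weight of nonzero complex numbers such that the weighted backward shift B_λ is bounded on ℓ^p(A). Suppose there exist an integer m ≥ p and f ∈ ℓ^p(A) such that f^m is a hypercyclic vector for B_λ (powers taken coordinatewise). Then there exists an increasing sequence of positive integers (n_k) such that for every vertex v ∈ A, sup_{u ∈ Chi^{n_k}(v)} |λ(v→u)| → +∞ as k → ∞. -/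
open Filter Topology
open scoped ENNReal NNReal

/-- A rooted directed tree on a vertex set `A`: a root, a parent map (with the convention
`par root = root`), such that every vertex reaches the root after finitely many steps.
This is equivalent to a connected acyclic directed graph in which every vertex other than
the root has exactly one parent and the root has none. -/
structure DirTree (A : Type*) where
  root : A
  par : A → A
  par_root : par root = root
  reaches : ∀ v, ∃ n, par^[n] v = root

namespace DirTree
variable {A : Type*} (T : DirTree A)

/-- The set of children of a vertex. -/
def chi (v : A) : Set A := {u | u ≠ T.root ∧ T.par u = v}

/-- `chiIter n v = Chi^n(v)`, the set of `n`-th descendants of `v`. -/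
def chiIter : ℕ → A → Set A
  | 0, v => {v}
  | n + 1, v => ⋃ u ∈ chiIter n v, T.chi u

/-- For `u ∈ Chi^n(v)`, `wt lam n u = λ(v → u) = ∏_{k<n} λ_{Par^k(u)}`. -/
def wt (lam : A → ℂ) (n : ℕ) (u : A) : ℂ :=
  ∏ k ∈ Finset.range n, lam (T.par^[k] u)

/-- `B` is the weighted backward shift with weight `lam` on `ℓ^p(A)`:
`(B f)(v) = ∑_{u ∈ Chi(v)} λ_u f(u)`. -/
def IsWBS (lam : A → ℂ) {p : ℝ≥0∞} [Fact (1 ≤ p)]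
    (B : lp (fun _ : A => ℂ) p →L[ℂ] lp (fun _ : A => ℂ) p) : Prop :=
  ∀ f : lp (fun _ : A => ℂ) p, ∀ v : A,
    (B f : ∀ _ : A, ℂ) v = ∑' u : T.chi v, lam u * (f : ∀ _ : A, ℂ) u

end DirTree

/-! ### Auxiliary lemmas -/

lemma ennnorm_tsum_le {ι : Type*} (f : ι → ℂ) :
    (‖∑' i, f i‖₊ : ℝ≥0∞) ≤ ∑' i, (‖f i‖₊ : ℝ≥0∞) := by
  by_cases h : Summable fun i => ‖f i‖₊
  · calc (‖∑' i, f i‖₊ : ℝ≥0∞) ≤ ((∑' i, ‖f i‖₊ : ℝ≥0) : ℝ≥0∞) :=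
        ENNReal.coe_le_coe.2 (nnnorm_tsum_le h)
      _ = ∑' i, (‖f i‖₊ : ℝ≥0∞) := ENNReal.coe_tsum h
  · have h2 : ∑' i, (‖f i‖₊ : ℝ≥0∞) = ⊤ := by
      by_contra hne
      exact h (ENNReal.tsum_coe_ne_top_iff_summable.1 hne)
    simp [h2]

lemma tsum_pow_le {A : Type*} (p : ℝ≥0∞) [Fact (1 ≤ p)] (hp : p ≠ ∞) (m : ℕ)
    (hm : p ≤ (m : ℝ≥0∞)) (f : lp (fun _ : A => ℂ) p) :
    ∃ D : ℝ≥0∞, D ≠ ⊤ ∧ ∀ s : Set A,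
      ∑' u : s, (‖(f : ∀ _ : A, ℂ) (u : A)‖₊ : ℝ≥0∞) ^ m ≤ D := by
  have hp1 : (1 : ℝ≥0∞) ≤ p := Fact.out
  have hp0 : p ≠ 0 := (lt_of_lt_of_le zero_lt_one hp1).ne'
  have hP : 0 < p.toReal := ENNReal.toReal_pos hp0 hp
  set P := p.toReal with hPdef
  have hsum : Summable fun u : A => ‖(f : ∀ _ : A, ℂ) u‖ ^ P := (lp.memℓp f).summable hP
  set a : A → ℝ≥0∞ := fun u => (‖(f : ∀ _ : A, ℂ) u‖₊ : ℝ≥0∞) with ha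
  set E : ℝ≥0∞ := ∑' u, a u ^ P with hEdef
  have hE : E ≠ ⊤ := by
    have h1 : ∀ u, a u ^ P = ((‖(f : ∀ _ : A, ℂ) u‖₊ ^ P : ℝ≥0) : ℝ≥0∞) := fun u =>
      (ENNReal.coe_rpow_of_nonneg _ hP.le).symm
    rw [hEdef, tsum_congr h1]
    refine ENNReal.tsum_coe_ne_top_iff_summable.2 ?_
    rw [← NNReal.summable_coe]
    simpa [NNReal.coe_rpow, coe_nnnorm] using hsum
  set C : ℝ≥0∞ := E ^ (1 / P) with hCdef
  have hC : C ≠ ⊤ := (ENNReal.rpow_lt_top_of_nonneg (by positivity) hE).ne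
  have haC : ∀ u, a u ≤ C := by
    intro u
    rw [hCdef, one_div, ENNReal.le_rpow_inv_iff hP]
    exact ENNReal.le_tsum u
  have hmP : P ≤ (m : ℝ) := by
    have := ENNReal.toReal_mono (ENNReal.natCast_ne_top m) hm
    simpa using this
  refine ⟨C ^ ((m : ℝ) - P) * E, ?_, ?_⟩
  · exact ENNReal.mul_ne_top (ENNReal.rpow_lt_top_of_nonneg (by linarith) hC).ne hE
  · intro s
    calc ∑' u : s, a (u : A) ^ m ≤ ∑' u : A, a u ^ m :=
        ENNReal.tsum_comp_le_tsum_of_injective Subtype.val_injective (fun u => a u ^ m)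
      _ ≤ ∑' u : A, C ^ ((m : ℝ) - P) * a u ^ P := by
        apply ENNReal.tsum_le_tsum
        intro u
        have h2 : a u ^ m = a u ^ ((m : ℝ) - P) * a u ^ P := by
          rw [← ENNReal.rpow_natCast (a u) m,
            ← ENNReal.rpow_add_of_nonneg _ _ (by linarith) hP.le, sub_add_cancel]
        rw [h2]
        exact mul_le_mul_left (ENNReal.rpow_le_rpow (haC u) (by linarith)) _
      _ = C ^ ((m : ℝ) - P) * E := ENNReal.tsum_mul_left

namespace DirTree
variable {A : Type*} (T : DirTree A)

lemma chiIter_succ_left (n : ℕ) (v : A) :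
    T.chiIter (n + 1) v = ⋃ u ∈ T.chi v, T.chiIter n u := by
  induction n generalizing v with
  | zero => ext x; simp [chiIter]
  | succ n ih =>
    show (⋃ w ∈ T.chiIter (n + 1) v, T.chi w) = _
    rw [ih v]
    ext x
    simp only [Set.mem_iUnion, exists_prop]
    constructor
    · rintro ⟨w, ⟨u, hu, hw⟩, hx⟩
      have : x ∈ ⋃ w ∈ T.chiIter n u, T.chi w := Set.mem_iUnion₂.2 ⟨w, hw, hx⟩
      exact ⟨u, hu, this⟩
    · rintro ⟨u, hu, hx⟩
      rcases Set.mem_iUnion₂.1 (show x ∈ ⋃ w ∈ T.chiIter n u, T.chi w from hx) with ⟨w, hw, hx'⟩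
      exact ⟨w, ⟨u, hu, hw⟩, hx'⟩

lemma par_of_mem_chiIter : ∀ {n : ℕ} {v u : A}, u ∈ T.chiIter n v → T.par^[n] u = v := by
  intro n
  induction n with
  | zero => intro v u hu; simpa [chiIter] using hu
  | succ n ih =>
    intro v u hu
    rcases Set.mem_iUnion₂.1 (show u ∈ ⋃ w ∈ T.chiIter n v, T.chi w from hu) with ⟨w, hw, hu'⟩
    rw [Function.iterate_succ_apply, hu'.2, ih hw]

lemma wt_succ (lam : A → ℂ) (n : ℕ) (u : A) :
    T.wt lam (n + 1) u = T.wt lam n u * lam (T.par^[n] u) :=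
  Finset.prod_range_succ _ _

lemma tsum_chiIter_le (a : A → ℝ≥0∞) (n : ℕ) (v : A) :
    ∑' u : T.chi v, ∑' w : T.chiIter n (u : A), a w ≤ ∑' w : T.chiIter (n + 1) v, a w := by
  have hmem : ∀ x : Σ u : T.chi v, T.chiIter n (u : A), (x.2 : A) ∈ T.chiIter (n + 1) v := by
    intro x
    rw [T.chiIter_succ_left]
    exact Set.mem_iUnion₂.2 ⟨(x.1 : A), x.1.2, x.2.2⟩
  have hinj : Function.Injective (fun x : Σ u : T.chi v, T.chiIter n (u : A) =>
      (⟨(x.2 : A), hmem x⟩ : T.chiIter (n + 1) v)) := by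
    rintro ⟨⟨u, hu⟩, ⟨w, hw⟩⟩ ⟨⟨u', hu'⟩, ⟨w', hw'⟩⟩ h
    have hww : w = w' := congrArg Subtype.val h
    subst hww
    have huu : u = u' := by
      have e1 : T.par^[n] w = u := T.par_of_mem_chiIter hw
      have e2 : T.par^[n] w = u' := T.par_of_mem_chiIter hw'
      rw [← e1, ← e2]
    subst huu
    rfl
  have h1 := ENNReal.tsum_sigma' (fun x : Σ u : T.chi v, T.chiIter n (u : A) => a x.2)
  rw [← h1]
  exact ENNReal.tsum_comp_le_tsum_of_injective hinj (fun w : T.chiIter (n + 1) v => a w)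

lemma key_estimate (lam : A → ℂ) {p : ℝ≥0∞} [Fact (1 ≤ p)]
    (B : lp (fun _ : A => ℂ) p →L[ℂ] lp (fun _ : A => ℂ) p) (hB : T.IsWBS lam B)
    (g : lp (fun _ : A => ℂ) p) :
    ∀ n v, (‖((B ^ n) g : ∀ _ : A, ℂ) v‖₊ : ℝ≥0∞) ≤
      (⨆ u ∈ T.chiIter n v, (‖T.wt lam n u‖₊ : ℝ≥0∞)) *
        ∑' u : T.chiIter n v, (‖(g : ∀ _ : A, ℂ) (u : A)‖₊ : ℝ≥0∞) := by
  intro n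
  induction n with
  | zero =>
    intro v
    have h1 : ((B ^ 0) g : ∀ _ : A, ℂ) v = (g : ∀ _ : A, ℂ) v := by rw [pow_zero]; rfl
    have h2 : T.chiIter 0 v = {v} := rfl
    rw [h1, h2]
    have h3 : ∑' u : ({v} : Set A), (‖(g : ∀ _ : A, ℂ) (u : A)‖₊ : ℝ≥0∞) = ‖(g : ∀ _ : A, ℂ) v‖₊ :=
      tsum_singleton v (fun u => (‖(g : ∀ _ : A, ℂ) u‖₊ : ℝ≥0∞))
    rw [h3]
    simp [wt]
  | succ n ih =>
    intro v
    have hsx : ((B ^ (n + 1)) g : ∀ _ : A, ℂ) v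
        = ∑' u : T.chi v, lam u * ((B ^ n) g : ∀ _ : A, ℂ) u := by
      have h4 : (B ^ (n + 1)) g = B ((B ^ n) g) := by rw [pow_succ']; rfl
      rw [h4]; exact hB ((B ^ n) g) v
    set S : ℝ≥0∞ := ⨆ u ∈ T.chiIter (n + 1) v, (‖T.wt lam (n + 1) u‖₊ : ℝ≥0∞) with hS
    have hsub_a : ∀ u : T.chi v,
        (‖lam (u : A)‖₊ : ℝ≥0∞) * ⨆ w ∈ T.chiIter n (u : A), (‖T.wt lam n w‖₊ : ℝ≥0∞) ≤ S := by
      intro u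
      rw [ENNReal.mul_iSup]
      refine iSup_le fun w => ?_
      rw [ENNReal.mul_iSup]
      refine iSup_le fun hw => ?_
      have hw' : w ∈ T.chiIter (n + 1) v := by
        rw [T.chiIter_succ_left]
        exact Set.mem_iUnion₂.2 ⟨(u : A), u.2, hw⟩
      have heq : (‖lam (u : A)‖₊ : ℝ≥0∞) * ‖T.wt lam n w‖₊ = (‖T.wt lam (n + 1) w‖₊ : ℝ≥0∞) := by
        rw [T.wt_succ, T.par_of_mem_chiIter hw, nnnorm_mul, ENNReal.coe_mul, mul_comm]
      rw [heq, hS]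
      exact le_iSup₂ (f := fun w _ => ((‖T.wt lam (n + 1) w‖₊ : ℝ≥0∞))) w hw'
    calc (‖((B ^ (n + 1)) g : ∀ _ : A, ℂ) v‖₊ : ℝ≥0∞)
        = ‖∑' u : T.chi v, lam u * ((B ^ n) g : ∀ _ : A, ℂ) u‖₊ := by rw [hsx]
      _ ≤ ∑' u : T.chi v, (‖lam (u : A) * ((B ^ n) g : ∀ _ : A, ℂ) u‖₊ : ℝ≥0∞) :=
          ennnorm_tsum_le _
      _ = ∑' u : T.chi v, (‖lam (u : A)‖₊ : ℝ≥0∞) * ‖((B ^ n) g : ∀ _ : A, ℂ) u‖₊ :=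
          tsum_congr fun u => by rw [nnnorm_mul, ENNReal.coe_mul]
      _ ≤ ∑' u : T.chi v, S * ∑' w : T.chiIter n (u : A), (‖(g : ∀ _ : A, ℂ) (w : A)‖₊ : ℝ≥0∞) := by
          refine ENNReal.tsum_le_tsum fun u => ?_
          calc (‖lam (u : A)‖₊ : ℝ≥0∞) * ‖((B ^ n) g : ∀ _ : A, ℂ) u‖₊
              ≤ (‖lam (u : A)‖₊ : ℝ≥0∞) *
                ((⨆ w ∈ T.chiIter n (u : A), (‖T.wt lam n w‖₊ : ℝ≥0∞)) *
                  ∑' w : T.chiIter n (u : A), (‖(g : ∀ _ : A, ℂ) (w : A)‖₊ : ℝ≥0∞)) :=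
                mul_le_mul_right (ih (u : A)) _
            _ = ((‖lam (u : A)‖₊ : ℝ≥0∞) * ⨆ w ∈ T.chiIter n (u : A), (‖T.wt lam n w‖₊ : ℝ≥0∞)) *
                  ∑' w : T.chiIter n (u : A), (‖(g : ∀ _ : A, ℂ) (w : A)‖₊ : ℝ≥0∞) :=
                (mul_assoc _ _ _).symm
            _ ≤ S * ∑' w : T.chiIter n (u : A), (‖(g : ∀ _ : A, ℂ) (w : A)‖₊ : ℝ≥0∞) :=
                mul_le_mul_left (hsub_a u) _
      _ = S * ∑' u : T.chi v, ∑' w : T.chiIter n (u : A), (‖(g : ∀ _ : A, ℂ) (w : A)‖₊ : ℝ≥0∞) :=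
          ENNReal.tsum_mul_left
      _ ≤ S * ∑' w : T.chiIter (n + 1) v, (‖(g : ∀ _ : A, ℂ) (w : A)‖₊ : ℝ≥0∞) :=
          mul_le_mul_right (T.tsum_chiIter_le (fun w => (‖(g : ∀ _ : A, ℂ) w‖₊ : ℝ≥0∞)) n v) S

end DirTree

/-- Let `B` be a bounded weighted backward shift on `ℓ^p(A)` over a rooted
directed tree `A`, `1 ≤ p < ∞`. If there are an integer `m ≥ p` and `f ∈ ℓ^p(A)` whose
coordinatewise `m`-th power `g` is a hypercyclic vector for `B`, then there is an increasing
sequence of positive integers `(n_k)` with `sup_{u ∈ Chi^{n_k}(v)} |λ(v→u)| → ∞` for every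
vertex `v`. -/
theorem stmt6 {A : Type*} [Countable A] (T : DirTree A)
    (hleaf : ∀ v : A, (T.chi v).Nonempty)
    (lam : A → ℂ) (hlam : ∀ v, lam v ≠ 0)
    (p : ℝ≥0∞) [Fact (1 ≤ p)] (hp : p ≠ ∞)
    (B : lp (fun _ : A => ℂ) p →L[ℂ] lp (fun _ : A => ℂ) p) (hB : T.IsWBS lam B)
    (m : ℕ) (hm : p ≤ (m : ℝ≥0∞))
    (f g : lp (fun _ : A => ℂ) p)
    (hg : ∀ v : A, (g : ∀ _ : A, ℂ) v = ((f : ∀ _ : A, ℂ) v) ^ m)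
    (hhc : Dense (Set.range fun n : ℕ => (B ^ n) g)) :
    ∃ n : ℕ → ℕ, StrictMono n ∧ (∀ k, 0 < n k) ∧ ∀ v : A,
      Tendsto (fun k : ℕ => ⨆ u ∈ T.chiIter (n k) v, (‖T.wt lam (n k) u‖₊ : ℝ≥0∞))
        atTop (𝓝 ⊤) := by
  classical
  have hp1 : (1 : ℝ≥0∞) ≤ p := Fact.out
  have hp0 : p ≠ 0 := (lt_of_lt_of_le zero_lt_one hp1).ne'
  haveI : Nonempty A := ⟨T.root⟩
  haveI : Nontrivial (lp (fun _ : A => ℂ) p) := by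
    refine ⟨lp.single p T.root (1 : ℂ), 0, fun h => ?_⟩
    have h0 : (lp.single p T.root (1 : ℂ) : ∀ _ : A, ℂ) T.root = 1 :=
      lp.single_apply_self p T.root 1
    rw [h] at h0
    simp at h0
  haveI : ∀ x : lp (fun _ : A => ℂ) p, NeBot (𝓝[≠] x) := fun x =>
    Module.punctured_nhds_neBot ℂ _ x
  obtain ⟨e, he⟩ := exists_surjective_nat A
  -- the target vectors
  set h : ℕ → lp (fun _ : A => ℂ) p := fun k =>
    ∑ i ∈ Finset.range (k + 1), lp.single p (e i) ((k + 2 : ℕ) : ℂ) with hhdef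
  -- coordinate lower bound for the targets
  have hcoord : ∀ k : ℕ, ∀ v : A, (∃ i ≤ k, e i = v) →
      (k + 2 : ℝ) ≤ ‖(h k : ∀ _ : A, ℂ) v‖ := by
    intro k v hv
    obtain ⟨i₀, hi₀k, hi₀⟩ := hv
    have hterm : ∀ i, (lp.single p (e i) ((k + 2 : ℕ) : ℂ) : ∀ _ : A, ℂ) v
        = if v = e i then ((k + 2 : ℕ) : ℂ) else 0 := by
      intro i
      by_cases hvi : v = e i
      · rw [if_pos hvi]; subst hvi; exact lp.single_apply_self p (e i) _
      · rw [if_neg hvi]; exact lp.single_apply_ne p (e i) _ hvi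
    have hval : (h k : ∀ _ : A, ℂ) v
        = ((Finset.range (k + 1)).filter (fun i => v = e i)).card • ((k + 2 : ℕ) : ℂ) := by
      rw [hhdef]
      rw [lp.coeFn_sum]
      rw [Finset.sum_apply]
      rw [Finset.sum_congr rfl fun i _ => hterm i]
      rw [Finset.sum_ite, Finset.sum_const, Finset.sum_const, smul_zero, add_zero]
    rw [hval]
    have hcard : 1 ≤ ((Finset.range (k + 1)).filter (fun i => v = e i)).card := by
      refine Finset.card_pos.2 ⟨i₀, ?_⟩
      simp [Finset.mem_filter, Finset.mem_range, Nat.lt_succ_of_le hi₀k, hi₀.symm]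
    rw [nsmul_eq_mul, norm_mul]
    have h1 : ‖((k + 2 : ℕ) : ℂ)‖ = (k + 2 : ℝ) := by
      rw [Complex.norm_natCast]; push_cast; ring
    rw [h1]
    have h2 : (1 : ℝ) ≤ ‖(((Finset.range (k + 1)).filter (fun i => v = e i)).card : ℂ)‖ := by
      rw [Complex.norm_natCast]
      exact_mod_cast hcard
    nlinarith [norm_nonneg (((Finset.range (k + 1)).filter (fun i => v = e i)).card : ℂ)]
  -- selection of the sequence
  have hsel : ∀ N k : ℕ, ∃ j : ℕ, N < j ∧ ‖(B ^ j) g - h k‖ < 1 := by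
    intro N k
    have hd : Dense ((Set.range fun j : ℕ => (B ^ j) g)
        \ ((fun j : ℕ => (B ^ j) g) '' Set.Iic N)) :=
      hhc.diff_finite ((Set.finite_Iic N).image _)
    obtain ⟨x, hx, hxb⟩ := hd.exists_mem_open Metric.isOpen_ball
      ⟨h k, Metric.mem_ball_self one_pos⟩
    obtain ⟨j, rfl⟩ := hx.1
    refine ⟨j, ?_, ?_⟩
    · by_contra hj
      push_neg at hj
      exact hx.2 ⟨j, hj, rfl⟩
    · have := Metric.mem_ball.1 hxb
      rwa [dist_eq_norm] at this
  choose F hF1 hF2 using hsel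
  set n : ℕ → ℕ := fun k => Nat.rec (F 0 0) (fun k ih => F ih (k + 1)) k with hndef
  have hnsucc : ∀ k, n (k + 1) = F (n k) (k + 1) := fun k => rfl
  have hmono : StrictMono n :=
    strictMono_nat_of_lt_succ fun k => by rw [hnsucc]; exact hF1 (n k) (k + 1)
  have hpos : ∀ k, 0 < n k := fun k =>
    lt_of_lt_of_le (hF1 0 0) (hmono.monotone (Nat.zero_le k))
  have hclose : ∀ k, ‖(B ^ (n k)) g - h k‖ < 1 := by
    intro k
    cases k with
    | zero => exact hF2 0 0
    | succ k => rw [hnsucc]; exact hF2 (n k) (k + 1)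
  -- pointwise lower bound for the orbit
  have hlow : ∀ k : ℕ, ∀ v : A, (∃ i ≤ k, e i = v) →
      (k + 1 : ℝ) ≤ ‖((B ^ (n k)) g : ∀ _ : A, ℂ) v‖ := by
    intro k v hv
    have h1 := hcoord k v hv
    have h2 := lp.norm_apply_le_norm hp0 ((B ^ (n k)) g - h k) v
    rw [lp.coeFn_sub, Pi.sub_apply] at h2
    have h4 := hclose k
    have h5 : ‖(h k : ∀ _ : A, ℂ) v‖ - ‖((B ^ (n k)) g : ∀ _ : A, ℂ) v‖
        ≤ ‖(h k : ∀ _ : A, ℂ) v - ((B ^ (n k)) g : ∀ _ : A, ℂ) v‖ := norm_sub_norm_le _ _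
    rw [norm_sub_rev] at h5
    linarith
  -- the uniform ℓ^p bound
  obtain ⟨D, hD, hDs⟩ := tsum_pow_le p hp m hm f
  set D' : ℝ≥0∞ := D + 1 with hD'def
  have hD'0 : D' ≠ 0 := by simp [hD'def]
  have hD't : D' ≠ ⊤ := by
    rw [hD'def]
    exact ENNReal.add_ne_top.2 ⟨hD, ENNReal.one_ne_top⟩
  have hkey : ∀ k : ℕ, ∀ v : A, (‖((B ^ (n k)) g : ∀ _ : A, ℂ) v‖₊ : ℝ≥0∞) ≤
      (⨆ u ∈ T.chiIter (n k) v, (‖T.wt lam (n k) u‖₊ : ℝ≥0∞)) * D' := by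
    intro k v
    refine (T.key_estimate lam B hB g (n k) v).trans (mul_le_mul_right ?_ _)
    have he1 : ∀ u : T.chiIter (n k) v, (‖(g : ∀ _ : A, ℂ) (u : A)‖₊ : ℝ≥0∞)
        = (‖(f : ∀ _ : A, ℂ) (u : A)‖₊ : ℝ≥0∞) ^ m := by
      intro u
      rw [hg, nnnorm_pow, ENNReal.coe_pow]
    rw [tsum_congr he1]
    exact le_trans (hDs _) le_self_add
  refine ⟨n, hmono, hpos, ?_⟩
  intro v
  obtain ⟨i₀, hi₀⟩ := he v
  refine ENNReal.tendsto_nhds_top fun M => ?_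
  obtain ⟨k₁, hk₁⟩ := ENNReal.exists_nat_gt
    (ENNReal.mul_ne_top (ENNReal.natCast_ne_top M) hD't)
  filter_upwards [eventually_ge_atTop (max i₀ k₁)] with k hk
  have hklow : (k + 1 : ℝ) ≤ ‖((B ^ (n k)) g : ∀ _ : A, ℂ) v‖ :=
    hlow k v ⟨i₀, le_trans (le_max_left _ _) hk, hi₀⟩
  have h6 : ((M : ℝ≥0∞)) * D' < (‖((B ^ (n k)) g : ∀ _ : A, ℂ) v‖₊ : ℝ≥0∞) := by
    have hkr : (k : ℝ) < ‖((B ^ (n k)) g : ∀ _ : A, ℂ) v‖ := by linarith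
    have hkn : (k : ℝ≥0∞) < (‖((B ^ (n k)) g : ∀ _ : A, ℂ) v‖₊ : ℝ≥0∞) := by
      rw [show ((k : ℕ) : ℝ≥0∞) = (((k : ℕ) : ℝ≥0) : ℝ≥0∞) by simp]
      rw [ENNReal.coe_lt_coe]
      rw [← NNReal.coe_lt_coe]
      simpa [coe_nnnorm] using hkr
    calc (M : ℝ≥0∞) * D' < (k₁ : ℝ≥0∞) := hk₁
      _ ≤ (k : ℝ≥0∞) := by exact_mod_cast le_trans (le_max_right i₀ k₁) hk
      _ < _ := hkn
  have h7 : (M : ℝ≥0∞) * D'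
      < (⨆ u ∈ T.chiIter (n k) v, (‖T.wt lam (n k) u‖₊ : ℝ≥0∞)) * D' :=
    lt_of_lt_of_le h6 (hkey k v)
  exact (ENNReal.mul_lt_mul_iff_left hD'0 hD't).1 h7
end

section
/- Let A be a rooted directed tree, let 1 ≤ p < ∞, and let λ be a weight such that B_λ is bounded on ℓ^p(A). If there is an increasing sequence of positive integers (n_k) such that sup_{u∈Chi^{n_k}(v)} |λ(v→u)| → +∞ for every v ∈ A, then for every d ≥ 1, every nonempty finite P ⊆ ℕ₀^d \ {0}, and all nonempty open sets U₁,…,U_d, V, W ⊆ ℓ^p(A) with 0 ∈ W, there exist u = (u₁,…,u_d) ∈ U₁×⋯×U_d, β ∈ P, and N ≥ 1 with B_λ^N(u^β) ∈ V and B_λ^N(u^α) ∈ W for all α ∈ P, α ≠ β. -/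
open Filter Topology
open scoped ENNReal NNReal

namespace DirTree
variable {A : Type*} {T : DirTree A}

lemma chiIter_spec {N : ℕ} {v w : A} (h : w ∈ T.chiIter N v) :
    T.par^[N] w = v ∧ ∀ k < N, T.par^[k] w ≠ T.root := by
  induction N generalizing v w with
  | zero => simp only [chiIter, Set.mem_singleton_iff] at h; subst h; exact ⟨rfl, by omega⟩
  | succ N ih =>
    simp only [chiIter, Set.mem_iUnion, exists_prop] at h
    obtain ⟨u, hu, hw⟩ := h
    obtain ⟨hpar, hroot⟩ := ih hu
    obtain ⟨hwr, hwp⟩ := hw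
    refine ⟨?_, ?_⟩
    · rw [Function.iterate_succ_apply, hwp, hpar]
    · intro k hk
      cases k with
      | zero => exact hwr
      | succ k =>
        rw [Function.iterate_succ_apply, hwp]
        exact hroot k (by omega)

variable [DecidableEq A] {p : ℝ≥0∞} [Fact (1 ≤ p)] {lam : A → ℂ}
variable {B : lp (fun _ : A => ℂ) p →L[ℂ] lp (fun _ : A => ℂ) p}

lemma B_single_root (hB : T.IsWBS lam B) (c : ℂ) :
    B (lp.single p T.root c) = 0 := by
  apply lp.ext
  funext v
  rw [hB]
  have h0 : ∀ u : T.chi v, lam u * (lp.single p T.root c : ∀ _ : A, ℂ) u = 0 := by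
    rintro ⟨u, hu, hpu⟩
    have := lp.single_apply_ne (E := fun _ : A => ℂ) p T.root c hu
    simp only [Subtype.coe_mk, this, mul_zero]
  rw [tsum_congr h0, tsum_zero]
  rfl

lemma B_single (hB : T.IsWBS lam B) {w : A} (hw : w ≠ T.root) (c : ℂ) :
    B (lp.single p w c) = lam w • lp.single p (T.par w) c := by
  apply lp.ext
  funext v
  rw [hB, lp.coeFn_smul, Pi.smul_apply]
  by_cases hv : v = T.par w
  · subst hv
    have hwv : w ∈ T.chi (T.par w) := ⟨hw, rfl⟩
    rw [tsum_eq_single (⟨w, hwv⟩ : T.chi (T.par w))]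
    · have h1 := lp.single_apply_self (E := fun _ : A => ℂ) p w c
      have h2 := lp.single_apply_self (E := fun _ : A => ℂ) p (T.par w) c
      simp only [Subtype.coe_mk, h1, h2, smul_eq_mul]
    · rintro ⟨u, hu⟩ hne
      have hne' : u ≠ w := fun h => hne (Subtype.ext h)
      have := lp.single_apply_ne (E := fun _ : A => ℂ) p w c hne'
      simp only [Subtype.coe_mk, this, mul_zero]
  · have h0 : ∀ u : T.chi v, lam u * (lp.single p w c : ∀ _ : A, ℂ) u = 0 := by
      rintro ⟨u, hu, hpu⟩
      have hne' : u ≠ w := by rintro rfl; exact hv hpu.symm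
      have := lp.single_apply_ne (E := fun _ : A => ℂ) p w c hne'
      simp only [Subtype.coe_mk, this, mul_zero]
    rw [tsum_congr h0, tsum_zero]
    have := lp.single_apply_ne (E := fun _ : A => ℂ) p (T.par w) c hv
    simp only [this, smul_eq_mul, mul_zero]

lemma Bpow_single_of (hB : T.IsWBS lam B) {N : ℕ} {w : A}
    (h : ∀ k < N, T.par^[k] w ≠ T.root) (c : ℂ) :
    (B ^ N) (lp.single p w c) = T.wt lam N w • lp.single p (T.par^[N] w) c := by
  induction N generalizing w with
  | zero =>
    simp only [pow_zero, ContinuousLinearMap.one_apply, Function.iterate_zero_apply]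
    rw [wt, Finset.range_zero, Finset.prod_empty, one_smul]
  | succ N ih =>
    have hw : w ≠ T.root := by simpa using h 0 (Nat.succ_pos N)
    have h' : ∀ k < N, T.par^[k] (T.par w) ≠ T.root := by
      intro k hk
      rw [← Function.iterate_succ_apply]
      exact h (k + 1) (by omega)
    have hwt : T.wt lam (N + 1) w = lam w * T.wt lam N (T.par w) := by
      rw [wt, wt, Finset.prod_range_succ', Function.iterate_zero_apply, mul_comm]
      simp only [Function.iterate_succ_apply]
    have hit : T.par^[N + 1] w = T.par^[N] (T.par w) := Function.iterate_succ_apply _ _ _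
    rw [pow_succ, ContinuousLinearMap.mul_apply, B_single hB hw, map_smul, ih h', smul_smul,
      hwt, hit]

lemma Bpow_single_zero (hB : T.IsWBS lam B) {N : ℕ} {w : A} {k : ℕ}
    (hk : k < N) (hkr : T.par^[k] w = T.root) (c : ℂ) :
    (B ^ N) (lp.single p w c) = 0 := by
  have hex : ∃ k, T.par^[k] w = T.root := ⟨k, hkr⟩
  have hk0r : T.par^[Nat.find hex] w = T.root := Nat.find_spec hex
  have hk0lt : Nat.find hex < N := lt_of_le_of_lt (Nat.find_le hkr) hk
  have hmin : ∀ j < Nat.find hex, T.par^[j] w ≠ T.root := fun j hj => Nat.find_min hex hj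
  have hNdecomp : N = (N - Nat.find hex - 1) + 1 + Nat.find hex := by omega
  rw [hNdecomp, pow_add, pow_add, ContinuousLinearMap.mul_apply,
    ContinuousLinearMap.mul_apply, Bpow_single_of hB hmin c, hk0r, map_smul, pow_one,
    B_single_root hB, smul_zero, map_zero]

end DirTree

lemma digits_inj : ∀ (d : ℕ) (M : ℕ) (a b : Fin d → ℕ), (∀ j, a j < M) → (∀ j, b j < M) →
    (∑ j : Fin d, M ^ (j : ℕ) * a j) = (∑ j : Fin d, M ^ (j : ℕ) * b j) → a = b := by
  intro d
  induction d with
  | zero => intro M a b _ _ _; funext j; exact absurd j.2 (by omega)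
  | succ d ih =>
    intro M a b ha hb hsum
    have hM : 0 < M := lt_of_le_of_lt (Nat.zero_le _) (ha 0)
    rw [Fin.sum_univ_succ, Fin.sum_univ_succ] at hsum
    simp only [Fin.val_zero, pow_zero, one_mul, Fin.val_succ] at hsum
    have hfac : ∀ c : Fin (d+1) → ℕ,
        (∑ j : Fin d, M ^ ((j : ℕ) + 1) * c j.succ) = M * ∑ j : Fin d, M ^ (j : ℕ) * c j.succ := by
      intro c
      rw [Finset.mul_sum]
      exact Finset.sum_congr rfl fun j _ => by ring
    rw [hfac a, hfac b] at hsum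
    have h0 : a 0 = b 0 := by
      have := congrArg (· % M) hsum
      simpa [Nat.add_mul_mod_self_left, Nat.mod_eq_of_lt (ha 0), Nat.mod_eq_of_lt (hb 0)]
        using this
    have htail : ∑ j : Fin d, M ^ (j : ℕ) * a j.succ = ∑ j : Fin d, M ^ (j : ℕ) * b j.succ := by
      rw [h0] at hsum
      have := Nat.add_left_cancel hsum
      exact Nat.eq_of_mul_eq_mul_left hM this
    have := ih M (fun j => a j.succ) (fun j => b j.succ) (fun j => ha j.succ)
      (fun j => hb j.succ) htail
    funext j
    refine Fin.cases ?_ ?_ j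
    · exact h0
    · intro i; exact congrFun this i

section Eval
variable {A : Type*} [DecidableEq A] {p : ℝ≥0∞} [Fact (1 ≤ p)]

lemma sum_single_apply (F : Finset A) (c : A → ℂ) (v : A) :
    ((∑ i ∈ F, lp.single p i (c i) : lp (fun _ : A => ℂ) p) : ∀ _ : A, ℂ) v
      = if v ∈ F then c v else 0 := by
  rw [lp.coeFn_sum, Finset.sum_apply]
  have : ∀ i ∈ F, (lp.single p i (c i) : ∀ _ : A, ℂ) v = if v = i then c i else 0 := by
    intro i _
    by_cases h : v = i
    · subst h; rw [if_pos rfl]; exact lp.single_apply_self (E := fun _ : A => ℂ) p v (c v)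
    · rw [if_neg h]; exact lp.single_apply_ne (E := fun _ : A => ℂ) p i (c i) h
  rw [Finset.sum_congr rfl this, Finset.sum_ite_eq F v c]

lemma smul_single_apply (b : ℂ) (wv : A) (v : A) :
    ((b • lp.single p wv (1 : ℂ) : lp (fun _ : A => ℂ) p) : ∀ _ : A, ℂ) v
      = if v = wv then b else 0 := by
  rw [lp.coeFn_smul, Pi.smul_apply]
  by_cases h : v = wv
  · subst h
    rw [if_pos rfl, lp.single_apply_self (E := fun _ : A => ℂ) p v (1 : ℂ), smul_eq_mul, mul_one]
  · rw [if_neg h, lp.single_apply_ne (E := fun _ : A => ℂ) p wv (1 : ℂ) h, smul_zero]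

lemma eval_mix (F : Finset A) (c b : A → ℂ) (w : A → A) (v : A) :
    (((∑ i ∈ F, lp.single p i (c i)) + ∑ s ∈ F, b s • lp.single p (w s) (1 : ℂ) :
        lp (fun _ : A => ℂ) p) : ∀ _ : A, ℂ) v
      = (if v ∈ F then c v else 0) + ∑ s ∈ F, (if v = w s then b s else 0) := by
  rw [lp.coeFn_add, Pi.add_apply, sum_single_apply]
  congr 1
  rw [lp.coeFn_sum, Finset.sum_apply]
  exact Finset.sum_congr rfl fun s _ => smul_single_apply (b s) (w s) v
end Eval

section Main

variable {A : Type*}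

set_option maxHeartbeats 2000000 in
theorem stmt7' (T : DirTree A)
    (lam : A → ℂ) (hlam : ∀ v, lam v ≠ 0)
    (p : ℝ≥0∞) [Fact (1 ≤ p)] (hp : p ≠ ∞)
    (B : lp (fun _ : A => ℂ) p →L[ℂ] lp (fun _ : A => ℂ) p) (hB : T.IsWBS lam B)
    (hsup : ∃ n : ℕ → ℕ, StrictMono n ∧ (∀ k, 0 < n k) ∧ ∀ v : A,
      Tendsto (fun k : ℕ => ⨆ u ∈ T.chiIter (n k) v, (‖T.wt lam (n k) u‖₊ : ℝ≥0∞))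
        atTop (𝓝 ⊤)) :
    ∀ d : ℕ, 1 ≤ d → ∀ P : Finset (Fin d → ℕ), P.Nonempty → (fun _ => 0) ∉ P →
    ∀ (U : Fin d → Set (lp (fun _ : A => ℂ) p)) (V W : Set (lp (fun _ : A => ℂ) p)),
      (∀ j, IsOpen (U j)) → (∀ j, (U j).Nonempty) →
      IsOpen V → V.Nonempty → IsOpen W → (0 : lp (fun _ : A => ℂ) p) ∈ W →
      ∃ u : Fin d → lp (fun _ : A => ℂ) p, (∀ j, u j ∈ U j) ∧
        ∃ β ∈ P, ∃ N : ℕ, 1 ≤ N ∧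
          ∀ α ∈ P, ∃ g : lp (fun _ : A => ℂ) p,
            (∀ v : A, (g : ∀ _ : A, ℂ) v = ∏ j, ((u j : ∀ _ : A, ℂ) v) ^ (α j)) ∧
            (α = β → (B ^ N) g ∈ V) ∧ (α ≠ β → (B ^ N) g ∈ W) := by
  classical
  intro d hd P hPne hP0 U V W hUo hUne hVo hVne hWo hW0
  obtain ⟨n, hmono, hpos, htend⟩ := hsup
  -- centers and radii
  choose x hxU using hUne
  obtain ⟨y, hyV⟩ := hVne
  choose εU hεU hballU using fun j => Metric.isOpen_iff.mp (hUo j) (x j) (hxU j)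
  obtain ⟨εV, hεV, hballV⟩ := Metric.isOpen_iff.mp hVo y hyV
  obtain ⟨εW, hεW, hballW⟩ := Metric.isOpen_iff.mp hWo 0 hW0
  -- finite approximation
  have approx : ∀ (f : lp (fun _ : A => ℂ) p) (ε : ℝ), 0 < ε →
      ∃ F0 : Finset A, ∀ G : Finset A, F0 ⊆ G →
        ‖(∑ i ∈ G, lp.single p i ((f : ∀ _ : A, ℂ) i)) - f‖ < ε := by
    intro f ε hε
    have hs : HasSum (fun i : A => lp.single p i ((f : ∀ _ : A, ℂ) i)) f := lp.hasSum_single hp f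
    have := Metric.tendsto_nhds.mp hs ε hε
    rw [SummationFilter.unconditional_filter, Filter.eventually_atTop] at this
    obtain ⟨F0, hF0⟩ := this
    exact ⟨F0, fun G hG => by simpa [dist_eq_norm] using hF0 G hG⟩
  choose F0 hF0 using fun j => approx (x j) (εU j / 2) (half_pos (hεU j))
  obtain ⟨Fy, hFy⟩ := approx y εV hεV
  set F : Finset A := (Finset.univ.biUnion F0) ∪ Fy with hF
  have hF0F : ∀ j, F0 j ⊆ F := fun j =>
    (Finset.subset_biUnion_of_mem F0 (Finset.mem_univ j)).trans Finset.subset_union_left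
  have hFyF : Fy ⊆ F := Finset.subset_union_right
  -- depth
  set dep : A → ℕ := fun v => Classical.choose (T.reaches v) with hdepdef
  have hdep : ∀ v, T.par^[dep v] v = T.root := fun v => Classical.choose_spec (T.reaches v)
  set D : ℕ := F.sup dep with hD
  have hdepD : ∀ v ∈ F, dep v ≤ D := fun v hv => Finset.le_sup hv
  -- exponents
  set Mb : ℕ := (P.sup fun α => Finset.univ.sup α) + 1 with hMbdef
  have hMb1 : 1 ≤ Mb := by rw [hMbdef]; omega
  have hMb : ∀ α ∈ P, ∀ j, α j < Mb := fun α hα j =>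
    lt_of_le_of_lt (le_trans (Finset.le_sup (Finset.mem_univ j)) (Finset.le_sup hα))
      (Nat.lt_succ_self _)
  set m : (Fin d → ℕ) → ℕ := fun α => ∑ j : Fin d, Mb ^ (j : ℕ) * α j with hm
  have hminj : ∀ α ∈ P, ∀ γ ∈ P, m α = m γ → α = γ := fun α hα γ hγ h =>
    digits_inj d Mb α γ (hMb α hα) (hMb γ hγ) h
  obtain ⟨β, hβP, hβmin⟩ := P.exists_min_image m hPne
  have hne0 : ∀ α ∈ P, ∃ j, α j ≠ 0 := by
    intro α hα
    by_contra h
    push_neg at h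
    exact hP0 (by rwa [show α = fun _ => 0 from funext h] at hα)
  have hmpos : ∀ α ∈ P, 0 < m α := by
    intro α hα
    obtain ⟨j, hj⟩ := hne0 α hα
    have : 0 < Mb ^ (j : ℕ) * α j := Nat.mul_pos (Nat.pow_pos (Nat.succ_pos _))
      (Nat.pos_of_ne_zero hj)
    exact lt_of_lt_of_le this (Finset.single_le_sum
      (f := fun j : Fin d => Mb ^ (j : ℕ) * α j) (fun _ _ => Nat.zero_le _)
      (Finset.mem_univ j))
  have hmβpos : 0 < m β := hmpos β hβP
  have hmlt : ∀ α ∈ P, α ≠ β → m β < m α := fun α hα hne =>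
    lt_of_le_of_ne (hβmin α hα) fun h => hne (hminj α hα β hβP h.symm)
  -- Y
  set Y : ℝ := 1 + ∑ s ∈ F, ‖(y : ∀ _ : A, ℂ) s‖ with hYdef
  have hY1 : (1 : ℝ) ≤ Y := le_add_of_nonneg_right (Finset.sum_nonneg fun _ _ => norm_nonneg _)
  have hYpos : (0 : ℝ) < Y := lt_of_lt_of_le one_pos hY1
  have hYs : ∀ s ∈ F, ‖(y : ∀ _ : A, ℂ) s‖ ≤ Y := fun s hs => by
    have := Finset.single_le_sum (f := fun s => ‖(y : ∀ _ : A, ℂ) s‖)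
      (fun _ _ => norm_nonneg _) hs
    simp only [hYdef]; linarith
  -- εm
  haveI hdne : Nonempty (Fin d) := ⟨⟨0, hd⟩⟩
  set εm : ℝ := Finset.univ.inf' Finset.univ_nonempty εU with hεmdef
  have hεmpos : 0 < εm := by
    rw [hεmdef, Finset.lt_inf'_iff]
    exact fun j _ => hεU j
  have hεmle : ∀ j, εm ≤ εU j := fun j => Finset.inf'_le _ (Finset.mem_univ j)
  -- η
  obtain ⟨c1, hc1, hc1'⟩ := exists_pos_mul_lt (show (0 : ℝ) < εm / 2 by positivity)
    (F.card : ℝ)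
  obtain ⟨c2, hc2, hc2'⟩ := exists_pos_mul_lt hεW ((F.card : ℝ) * Y)
  set η : ℝ := min 1 (min c1 c2) with hηdef
  have hηpos : 0 < η := lt_min one_pos (lt_min hc1 hc2)
  have hη1 : η ≤ 1 := min_le_left _ _
  have hηcard : (F.card : ℝ) * η < εm / 2 :=
    lt_of_le_of_lt (mul_le_mul_of_nonneg_left ((min_le_right _ _).trans (min_le_left _ _))
      (Nat.cast_nonneg _)) hc1'
  have hηW : (F.card : ℝ) * (η * Y) < εW := by
    have h1 : (F.card : ℝ) * (η * Y) = (F.card : ℝ) * Y * η := by ring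
    rw [h1]
    exact lt_of_le_of_lt (mul_le_mul_of_nonneg_left
      ((min_le_right _ _).trans (min_le_right _ _))
      (by positivity)) hc2'
  -- L
  set L : ℝ := Y / η ^ (m β) + 1 with hLdef
  have hLpos : 0 < L := by positivity
  have hYL : Y ≤ L * η ^ (m β) := by
    have hη' : (0 : ℝ) < η ^ (m β) := by positivity
    rw [hLdef, add_mul, div_mul_cancel₀ _ (ne_of_gt hη'), one_mul]
    linarith
  -- choose k
  have hev1 : ∀ᶠ k in (atTop : Filter ℕ), D < n k := by
    rw [Filter.eventually_atTop]
    exact ⟨D + 1, fun k hk => lt_of_lt_of_le (by omega) (le_trans hk (hmono.le_apply))⟩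
  have hev2 : ∀ᶠ k in (atTop : Filter ℕ), ∀ s ∈ F,
      (L.toNNReal : ℝ≥0∞) < ⨆ u ∈ T.chiIter (n k) s, (‖T.wt lam (n k) u‖₊ : ℝ≥0∞) := by
    rw [Finset.eventually_all]
    exact fun s _ => ENNReal.tendsto_nhds_top_iff_nnreal.mp (htend s) L.toNNReal
  obtain ⟨k, hk1, hk2⟩ := (hev1.and hev2).exists
  set N : ℕ := n k with hNdef
  have hND : D < N := hk1
  have hN1 : 1 ≤ N := hpos k
  -- choose w
  have hws : ∀ s : A, ∃ u : A, s ∈ F → (u ∈ T.chiIter N s ∧ L < ‖T.wt lam N u‖) := by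
    intro s
    by_cases hs : s ∈ F
    · have h2 := hk2 s hs
      rw [lt_iSup_iff] at h2
      obtain ⟨u, hu⟩ := h2
      rw [lt_iSup_iff] at hu
      obtain ⟨huF, hlt⟩ := hu
      refine ⟨u, fun _ => ⟨huF, ?_⟩⟩
      rw [ENNReal.coe_lt_coe] at hlt
      have := (Real.toNNReal_lt_iff_lt_coe (le_of_lt hLpos)).mp hlt
      simpa [coe_nnnorm] using this
    · exact ⟨s, fun h => absurd h hs⟩
  choose w hw using hws
  have hwChi : ∀ s ∈ F, w s ∈ T.chiIter N s := fun s hs => (hw s hs).1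
  have hwL : ∀ s ∈ F, L < ‖T.wt lam N (w s)‖ := fun s hs => (hw s hs).2
  have hwpar : ∀ s ∈ F, T.par^[N] (w s) = s := fun s hs =>
    (DirTree.chiIter_spec (hwChi s hs)).1
  have hwroot : ∀ s ∈ F, ∀ k' < N, T.par^[k'] (w s) ≠ T.root := fun s hs =>
    (DirTree.chiIter_spec (hwChi s hs)).2
  have hwnotF : ∀ s ∈ F, w s ∉ F := by
    intro s hs hmem
    exact hwroot s hs (dep (w s)) (lt_of_le_of_lt (hdepD _ hmem) hND) (hdep (w s))
  have hwinj : ∀ s ∈ F, ∀ t ∈ F, w s = w t → s = t := by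
    intro s hs t ht h
    rw [← hwpar s hs, ← hwpar t ht, h]
  have hwtne : ∀ s : A, T.wt lam N (w s) ≠ 0 := fun s =>
    Finset.prod_ne_zero_iff.mpr fun _ _ => hlam _
  have hwtpos : ∀ s ∈ F, 0 < ‖T.wt lam N (w s)‖ := fun s hs => lt_trans hLpos (hwL s hs)
  -- ζ
  have hζex : ∀ s : A, ∃ z : ℂ, z ^ (m β) = (y : ∀ _ : A, ℂ) s / T.wt lam N (w s) := fun s =>
    IsAlgClosed.exists_pow_nat_eq _ hmβpos
  choose ζ hζ using hζex
  have hζwt : ∀ s : A, ζ s ^ (m β) * T.wt lam N (w s) = (y : ∀ _ : A, ℂ) s := fun s => by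
    rw [hζ s, div_mul_cancel₀ _ (hwtne s)]
  have hζnorm : ∀ s : A, ‖ζ s‖ ^ (m β) * ‖T.wt lam N (w s)‖ = ‖(y : ∀ _ : A, ℂ) s‖ := fun s => by
    rw [← norm_pow, ← norm_mul, hζwt s]
  have hζle : ∀ s ∈ F, ‖ζ s‖ ≤ η := by
    intro s hs
    refine le_of_pow_le_pow_left₀ hmβpos.ne' (le_of_lt hηpos) ?_
    have h1 : ‖ζ s‖ ^ (m β) * ‖T.wt lam N (w s)‖ ≤ η ^ (m β) * ‖T.wt lam N (w s)‖ := by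
      rw [hζnorm s]
      calc ‖(y : ∀ _ : A, ℂ) s‖ ≤ Y := hYs s hs
        _ ≤ L * η ^ (m β) := hYL
        _ ≤ ‖T.wt lam N (w s)‖ * η ^ (m β) :=
            mul_le_mul_of_nonneg_right (le_of_lt (hwL s hs)) (by positivity)
        _ = η ^ (m β) * ‖T.wt lam N (w s)‖ := mul_comm _ _
    exact le_of_mul_le_mul_right h1 (hwtpos s hs)
  have hζη1 : ∀ s ∈ F, ∀ e : ℕ, 1 ≤ e → ‖ζ s‖ ^ e ≤ η := by
    intro s hs e he
    calc ‖ζ s‖ ^ e ≤ ‖ζ s‖ ^ 1 :=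
          pow_le_pow_of_le_one (norm_nonneg _) ((hζle s hs).trans hη1) he
      _ = ‖ζ s‖ := pow_one _
      _ ≤ η := hζle s hs
  -- the vectors
  have hp' : 0 < p.toReal := ENNReal.toReal_pos
    (ne_of_gt (lt_of_lt_of_le one_pos (Fact.out : 1 ≤ p))) hp
  have hnorm_single : ∀ v : A, ‖(lp.single p v (1 : ℂ) : lp (fun _ : A => ℂ) p)‖ = 1 := by
    intro v
    have h := lp.norm_single (E := fun _ : A => ℂ) (lt_of_lt_of_le one_pos (Fact.out : 1 ≤ p)) v (1 : ℂ)
    rw [norm_one] at h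
    exact h
  set u : Fin d → lp (fun _ : A => ℂ) p := fun j =>
    (∑ i ∈ F, lp.single p i ((x j : ∀ _ : A, ℂ) i)) +
      ∑ s ∈ F, (ζ s ^ (Mb ^ (j : ℕ))) • lp.single p (w s) (1 : ℂ) with hu
  set g : (Fin d → ℕ) → lp (fun _ : A => ℂ) p := fun α =>
    (∑ i ∈ F, lp.single p i (∏ j, ((x j : ∀ _ : A, ℂ) i) ^ (α j))) +
      ∑ s ∈ F, (ζ s ^ (m α)) • lp.single p (w s) (1 : ℂ) with hg
  -- membership in U j
  have huU : ∀ j, u j ∈ U j := by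
    intro j
    apply hballU j
    rw [Metric.mem_ball, dist_eq_norm]
    have hdiff : u j - x j = ((∑ i ∈ F, lp.single p i ((x j : ∀ _ : A, ℂ) i)) - x j) +
        ∑ s ∈ F, (ζ s ^ (Mb ^ (j : ℕ))) •
          (lp.single p (w s) (1 : ℂ) : lp (fun _ : A => ℂ) p) := by
      simp only [hu]; abel
    have h1 : ‖(∑ i ∈ F, lp.single p i ((x j : ∀ _ : A, ℂ) i)) - x j‖ < εU j / 2 :=
      hF0 j F (hF0F j)
    have h2 : ‖∑ s ∈ F, (ζ s ^ (Mb ^ (j : ℕ))) •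
        (lp.single p (w s) (1 : ℂ) : lp (fun _ : A => ℂ) p)‖ ≤
        (F.card : ℝ) * η := by
      refine le_trans (norm_sum_le _ _) ?_
      have : ∀ s ∈ F, ‖(ζ s ^ (Mb ^ (j : ℕ))) •
          (lp.single p (w s) (1 : ℂ) : lp (fun _ : A => ℂ) p)‖ ≤ η := by
        intro s hs
        rw [norm_smul, norm_pow, hnorm_single, mul_one]
        exact hζη1 s hs _ (Nat.one_le_iff_ne_zero.mpr (pow_ne_zero _ (by omega)))
      calc ∑ s ∈ F, ‖(ζ s ^ (Mb ^ (j : ℕ))) •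
            (lp.single p (w s) (1 : ℂ) : lp (fun _ : A => ℂ) p)‖
          ≤ ∑ _s ∈ F, η := Finset.sum_le_sum this
        _ = (F.card : ℝ) * η := by rw [Finset.sum_const, nsmul_eq_mul]
    calc ‖u j - x j‖ ≤ ‖(∑ i ∈ F, lp.single p i ((x j : ∀ _ : A, ℂ) i)) - x j‖ +
          ‖∑ s ∈ F, (ζ s ^ (Mb ^ (j : ℕ))) •
            (lp.single p (w s) (1 : ℂ) : lp (fun _ : A => ℂ) p)‖ := by
          rw [hdiff]; exact norm_add_le _ _
      _ < εU j / 2 + εm / 2 := add_lt_add_of_lt_of_le h1 (le_of_lt (lt_of_le_of_lt h2 hηcard))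
      _ ≤ εU j / 2 + εU j / 2 := by linarith [hεmle j]
      _ = εU j := by ring
  -- B^N on g
  have hBg : ∀ α : Fin d → ℕ, (B ^ N) (g α) =
      ∑ s ∈ F, (ζ s ^ (m α) * T.wt lam N (w s)) •
        (lp.single p s (1 : ℂ) : lp (fun _ : A => ℂ) p) := by
    intro α
    simp only [hg]
    rw [map_add, map_sum, map_sum]
    have hz : ∀ i ∈ F, (B ^ N) (lp.single p i (∏ j, ((x j : ∀ _ : A, ℂ) i) ^ (α j))) = 0 := by
      intro i hi
      exact DirTree.Bpow_single_zero hB (lt_of_le_of_lt (hdepD i hi) hND) (hdep i) _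
    rw [Finset.sum_congr rfl hz, Finset.sum_const, smul_zero, zero_add]
    refine Finset.sum_congr rfl fun s hs => ?_
    rw [map_smul, DirTree.Bpow_single_of hB (hwroot s hs) (1 : ℂ), hwpar s hs, smul_smul]
  refine ⟨u, huU, β, hβP, N, hN1, fun α hα => ⟨g α, ?_, ?_, ?_⟩⟩
  · -- pointwise product identity
    intro v
    have hgv : ((g α : lp (fun _ : A => ℂ) p) : ∀ _ : A, ℂ) v =
        (if v ∈ F then (∏ j, ((x j : ∀ _ : A, ℂ) v) ^ (α j)) else 0) +
          ∑ s ∈ F, (if v = w s then ζ s ^ (m α) else 0) :=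
      eval_mix (p := p) F (fun i => ∏ j, ((x j : ∀ _ : A, ℂ) i) ^ (α j))
        (fun s => ζ s ^ (m α)) w v
    have huv : ∀ j : Fin d, ((u j : ∀ _ : A, ℂ) v) =
        (if v ∈ F then (x j : ∀ _ : A, ℂ) v else 0) +
          ∑ s ∈ F, (if v = w s then ζ s ^ (Mb ^ (j : ℕ)) else 0) := fun j =>
      eval_mix (p := p) F (fun i => (x j : ∀ _ : A, ℂ) i) (fun s => ζ s ^ (Mb ^ (j : ℕ))) w v
    rw [hgv]
    by_cases hvF : v ∈ F
    · have hsum0 : ∀ (b : A → ℂ), ∑ s ∈ F, (if v = w s then b s else 0) = 0 := by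
        intro b
        refine Finset.sum_eq_zero fun s hs => ?_
        rw [if_neg]
        rintro rfl
        exact hwnotF s hs hvF
      rw [if_pos hvF, hsum0]
      rw [add_zero]
      refine Finset.prod_congr rfl fun j _ => ?_
      rw [huv j, if_pos hvF, hsum0, add_zero]
    · by_cases hvw : ∃ s ∈ F, v = w s
      · obtain ⟨s₀, hs₀, rfl⟩ := hvw
        have hsum1 : ∀ (b : A → ℂ), ∑ s ∈ F, (if w s₀ = w s then b s else 0) = b s₀ := by
          intro b
          rw [Finset.sum_eq_single_of_mem s₀ hs₀]
          · rw [if_pos rfl]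
          · intro t ht htne
            rw [if_neg]
            intro h
            exact htne (hwinj t ht s₀ hs₀ h.symm)
        rw [if_neg hvF, hsum1, zero_add]
        have : ∀ j : Fin d, ((u j : ∀ _ : A, ℂ) (w s₀)) = ζ s₀ ^ (Mb ^ (j : ℕ)) := by
          intro j
          rw [huv j, if_neg hvF, hsum1, zero_add]
        rw [Finset.prod_congr rfl fun j _ => by rw [this j, ← pow_mul]]
        rw [Finset.prod_pow_eq_pow_sum]
      · push_neg at hvw
        have hsum0 : ∀ (b : A → ℂ), ∑ s ∈ F, (if v = w s then b s else 0) = 0 := by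
          intro b
          exact Finset.sum_eq_zero fun s hs => if_neg (hvw s hs)
        rw [if_neg hvF, hsum0, add_zero]
        obtain ⟨j₀, hj₀⟩ := hne0 α hα
        rw [Finset.prod_eq_zero (Finset.mem_univ j₀)]
        rw [huv j₀, if_neg hvF, hsum0, add_zero]
        exact zero_pow hj₀
  · -- α = β : lands in V
    rintro rfl
    apply hballV
    rw [Metric.mem_ball, dist_eq_norm, hBg]
    have : ∀ s ∈ F, (ζ s ^ (m α) * T.wt lam N (w s)) •
        (lp.single p s (1 : ℂ) : lp (fun _ : A => ℂ) p) =
        lp.single p s ((y : ∀ _ : A, ℂ) s) := by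
      intro s _
      rw [hζwt s, ← lp.single_smul, smul_eq_mul, mul_one]
    rw [Finset.sum_congr rfl this]
    exact hFy F hFyF
  · -- α ≠ β : lands in W
    intro hαβ
    apply hballW
    rw [Metric.mem_ball, dist_zero_right, hBg]
    have hterm : ∀ s ∈ F, ‖(ζ s ^ (m α) * T.wt lam N (w s)) •
        (lp.single p s (1 : ℂ) : lp (fun _ : A => ℂ) p)‖ ≤ η * Y := by
      intro s hs
      rw [norm_smul, hnorm_single, mul_one, norm_mul, norm_pow]
      have hdecomp : m α = (m α - m β) + m β := by
        have := hmlt α hα hαβ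
        omega
      rw [hdecomp, pow_add, mul_assoc, hζnorm s]
      have h1 : ‖ζ s‖ ^ (m α - m β) ≤ η := hζη1 s hs _ (by
        have := hmlt α hα hαβ; omega)
      exact mul_le_mul h1 (hYs s hs) (norm_nonneg _) (le_of_lt hηpos)
    calc ‖∑ s ∈ F, (ζ s ^ (m α) * T.wt lam N (w s)) •
          (lp.single p s (1 : ℂ) : lp (fun _ : A => ℂ) p)‖
        ≤ ∑ s ∈ F, ‖(ζ s ^ (m α) * T.wt lam N (w s)) •
          (lp.single p s (1 : ℂ) : lp (fun _ : A => ℂ) p)‖ :=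
          norm_sum_le _ _
      _ ≤ ∑ _s ∈ F, η * Y := Finset.sum_le_sum hterm
      _ = (F.card : ℝ) * (η * Y) := by rw [Finset.sum_const, nsmul_eq_mul]
      _ < εW := hηW

end Main



/-- Let `B` be a bounded weighted backward shift on `ℓ^p(A)` over a rooted
directed tree. If there is an increasing sequence of positive integers `(n_k)` with
`sup_{u ∈ Chi^{n_k}(v)} |λ(v→u)| → ∞` for every `v`, then for every `d ≥ 1`, every nonempty
finite `P ⊆ ℕ₀^d \ {0}` and all nonempty open sets `U₁,…,U_d, V, W` with `0 ∈ W`, there are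
`u ∈ U₁ × ⋯ × U_d`, `β ∈ P` and `N ≥ 1` with `B^N(u^β) ∈ V` and `B^N(u^α) ∈ W` for all
`α ∈ P \ {β}` (powers `u^α` taken coordinatewise). -/
theorem stmt7 {A : Type*} [Countable A] (T : DirTree A)
    (hleaf : ∀ v : A, (T.chi v).Nonempty)
    (lam : A → ℂ) (hlam : ∀ v, lam v ≠ 0)
    (p : ℝ≥0∞) [Fact (1 ≤ p)] (hp : p ≠ ∞)
    (B : lp (fun _ : A => ℂ) p →L[ℂ] lp (fun _ : A => ℂ) p) (hB : T.IsWBS lam B)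
    (hsup : ∃ n : ℕ → ℕ, StrictMono n ∧ (∀ k, 0 < n k) ∧ ∀ v : A,
      Tendsto (fun k : ℕ => ⨆ u ∈ T.chiIter (n k) v, (‖T.wt lam (n k) u‖₊ : ℝ≥0∞))
        atTop (𝓝 ⊤)) :
    ∀ d : ℕ, 1 ≤ d → ∀ P : Finset (Fin d → ℕ), P.Nonempty → (fun _ => 0) ∉ P →
    ∀ (U : Fin d → Set (lp (fun _ : A => ℂ) p)) (V W : Set (lp (fun _ : A => ℂ) p)),
      (∀ j, IsOpen (U j)) → (∀ j, (U j).Nonempty) →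
      IsOpen V → V.Nonempty → IsOpen W → (0 : lp (fun _ : A => ℂ) p) ∈ W →
      ∃ u : Fin d → lp (fun _ : A => ℂ) p, (∀ j, u j ∈ U j) ∧
        ∃ β ∈ P, ∃ N : ℕ, 1 ≤ N ∧
          ∀ α ∈ P, ∃ g : lp (fun _ : A => ℂ) p,
            (∀ v : A, (g : ∀ _ : A, ℂ) v = ∏ j, ((u j : ∀ _ : A, ℂ) v) ^ (α j)) ∧
            (α = β → (B ^ N) g ∈ V) ∧ (α ≠ β → (B ^ N) g ∈ W) := by
  intro d hd P hPne hP0 U V W hUo hUne hVo hVne hWo hW0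
  exact stmt7' T lam hlam p hp B hB hsup d hd P hPne hP0 U V W hUo hUne hVo hVne hWo hW0
end

section
/- Let A be a rooted directed tree and λ a weight such that B_λ is a bounded hypercyclic operator on ℓ^1(A). Then B_λ supports a hypercyclic algebra with respect to the coordinatewise product; that is, there exists a nonzero subalgebra of ℓ^1(A) all of whose nonzero elements are hypercyclic vectors for B_λ. -/
open Filter Topology
open scoped ENNReal NNReal

set_option maxHeartbeats 1000000
set_option linter.unusedSectionVars false
set_option linter.unusedVariables false

namespace Stmt8Aux

variable {A : Type*}

local notation "X" => lp (fun _ : A => ℂ) 1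

lemma summable_norm (f : X) : Summable fun v => ‖(f : ∀ _ : A, ℂ) v‖ := by
  have := (lp.memℓp f).summable (by norm_num : 0 < (1 : ℝ≥0∞).toReal)
  simpa using this

lemma norm_eq_tsum (f : X) : ‖f‖ = ∑' v, ‖(f : ∀ _ : A, ℂ) v‖ := by
  have := lp.norm_eq_tsum_rpow (by norm_num : 0 < (1 : ℝ≥0∞).toReal) f
  simpa using this

lemma memℓp_pmul (f g : X) : Memℓp (fun v => (f : ∀ _ : A, ℂ) v * (g : ∀ _ : A, ℂ) v) 1 := by
  apply memℓp_gen
  simp only [ENNReal.toReal_one, Real.rpow_one]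
  refine Summable.of_nonneg_of_le (fun v => norm_nonneg _) (fun v => ?_)
    ((summable_norm g).mul_left ‖f‖)
  rw [norm_mul]
  exact mul_le_mul_of_nonneg_right (lp.norm_apply_le_norm one_ne_zero f v) (norm_nonneg _)

/-- pointwise product on ℓ¹ -/
def pmul (f g : X) : X := ⟨fun v => (f : ∀ _ : A, ℂ) v * (g : ∀ _ : A, ℂ) v, memℓp_pmul f g⟩

@[simp] lemma pmul_apply (f g : X) (v : A) :
    (pmul f g : ∀ _ : A, ℂ) v = (f : ∀ _ : A, ℂ) v * (g : ∀ _ : A, ℂ) v := rfl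

lemma norm_pmul_le (f g : X) : ‖pmul f g‖ ≤ ‖f‖ * ‖g‖ := by
  refine lp.norm_le_of_tsum_le (by norm_num) (mul_nonneg (norm_nonneg _) (norm_nonneg _)) ?_
  simp only [ENNReal.toReal_one, Real.rpow_one, pmul_apply]
  calc ∑' v, ‖(f : ∀ _ : A, ℂ) v * (g : ∀ _ : A, ℂ) v‖
      ≤ ∑' v, ‖f‖ * ‖(g : ∀ _ : A, ℂ) v‖ := by
        refine Summable.tsum_le_tsum (fun v => ?_) ?_ ((summable_norm g).mul_left ‖f‖)
        · rw [norm_mul]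
          exact mul_le_mul_of_nonneg_right (lp.norm_apply_le_norm one_ne_zero f v)
            (norm_nonneg _)
        · exact Summable.of_nonneg_of_le (fun v => norm_nonneg _) (fun v => by
            rw [norm_mul]
            exact mul_le_mul_of_nonneg_right (lp.norm_apply_le_norm one_ne_zero f v)
              (norm_nonneg _)) ((summable_norm g).mul_left ‖f‖)
  _ = ‖f‖ * ‖g‖ := by rw [tsum_mul_left, ← norm_eq_tsum]

lemma pmul_add (f g h : X) : pmul f (g + h) = pmul f g + pmul f h := by
  apply lp.ext; funext v
  simp only [lp.coeFn_add, Pi.add_apply, pmul_apply]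
  ring

lemma add_pmul (f g h : X) : pmul (f + g) h = pmul f h + pmul g h := by
  apply lp.ext; funext v
  simp only [lp.coeFn_add, Pi.add_apply, pmul_apply]
  ring

lemma pmul_smul (c : ℂ) (f g : X) : pmul f (c • g) = c • pmul f g := by
  apply lp.ext; funext v
  simp only [lp.coeFn_smul, Pi.smul_apply, pmul_apply, smul_eq_mul]
  ring

lemma smul_pmul (c : ℂ) (f g : X) : pmul (c • f) g = c • pmul f g := by
  apply lp.ext; funext v
  simp only [lp.coeFn_smul, Pi.smul_apply, pmul_apply, smul_eq_mul]
  ring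

/-- pointwise product as a continuous bilinear map -/
noncomputable def pmulL : X →L[ℂ] X →L[ℂ] X :=
  LinearMap.mkContinuous₂
    (LinearMap.mk₂ ℂ pmul add_pmul (fun c f g => smul_pmul c f g) pmul_add
      (fun c f g => pmul_smul c f g)) 1
    (fun f g => by simpa using norm_pmul_le f g)

@[simp] lemma pmulL_apply (f g : X) : pmulL f g = pmul f g := rfl

/-- pointwise power: `ppow f n = f^(n+1)` coordinatewise. -/
noncomputable def ppow (f : X) : ℕ → X
  | 0 => f
  | n + 1 => pmul (ppow f n) f

@[simp] lemma ppow_apply (f : X) (n : ℕ) (v : A) :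
    (ppow f n : ∀ _ : A, ℂ) v = ((f : ∀ _ : A, ℂ) v) ^ (n + 1) := by
  induction n with
  | zero => simp [ppow]
  | succ n ih => simp [ppow, ih]; ring

lemma continuous_ppow (n : ℕ) : Continuous fun f : X => ppow f n := by
  induction n with
  | zero => exact continuous_id
  | succ n ih =>
    have : (fun f : X => ppow f (n + 1)) = fun f => pmulL (ppow f n) f := rfl
    rw [this]
    exact pmulL.isBoundedBilinearMap.continuous.comp (ih.prodMk continuous_id)

end Stmt8Aux


namespace Stmt8Aux
open DirTree

variable {A : Type*} [DecidableEq A] (T : DirTree A)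

lemma mem_chiIter_iff (n : ℕ) (v u : A) :
    u ∈ T.chiIter n v ↔ T.par^[n] u = v ∧ ∀ k < n, T.par^[k] u ≠ T.root := by
  induction n generalizing u with
  | zero => simp [chiIter]
  | succ n ih =>
    constructor
    · rintro hu
      simp only [chiIter, Set.mem_iUnion] at hu
      obtain ⟨w, hw, hu⟩ := hu
      obtain ⟨hur, hpu⟩ := hu
      rw [ih] at hw
      refine ⟨?_, ?_⟩
      · rw [Function.iterate_succ_apply, hpu]; exact hw.1
      · intro k hk
        cases k with
        | zero => simpa using hur
        | succ k =>
          rw [Function.iterate_succ_apply, hpu]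
          exact hw.2 k (by omega)
    · rintro ⟨h1, h2⟩
      simp only [chiIter, Set.mem_iUnion]
      refine ⟨T.par u, ?_, ?_, rfl⟩
      · rw [ih]
        refine ⟨by rwa [← Function.iterate_succ_apply], fun k _ => ?_⟩
        rw [← Function.iterate_succ_apply]
        exact h2 (k + 1) (by omega)
      · simpa using h2 0 (by omega)

lemma wt_ne_zero (lam : A → ℂ) (hlam : ∀ v, lam v ≠ 0) (n : ℕ) (u : A) :
    T.wt lam n u ≠ 0 :=
  Finset.prod_ne_zero_iff.2 fun k _ => hlam _

variable (lam : A → ℂ) (B : lp (fun _ : A => ℂ) 1 →L[ℂ] lp (fun _ : A => ℂ) 1)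
  (hB : T.IsWBS lam B)

include hB

lemma B_single_root (a : ℂ) : B (lp.single 1 T.root a) = 0 := by
  apply lp.ext; funext v
  rw [hB]
  have h0 : ∀ u : T.chi v, lam u * (lp.single 1 T.root a : ∀ _ : A, ℂ) u = 0 := by
    rintro ⟨u, hu1, hu2⟩
    rw [lp.single_apply_ne _ _ _ hu1, mul_zero]
  rw [tsum_congr h0, tsum_zero]
  simp

lemma B_single (u : A) (hu : u ≠ T.root) (a : ℂ) :
    B (lp.single 1 u a) = lp.single 1 (T.par u) (lam u * a) := by
  apply lp.ext; funext v
  rw [hB]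
  by_cases hv : v = T.par u
  · subst hv
    have hmem : u ∈ T.chi (T.par u) := ⟨hu, rfl⟩
    rw [tsum_eq_single (⟨u, hmem⟩ : T.chi (T.par u)) ?_]
    · simp [lp.single_apply_self]
    · rintro ⟨w, hw⟩ hne
      have hwu : w ≠ u := fun h => hne (Subtype.ext h)
      rw [lp.single_apply_ne _ _ _ hwu, mul_zero]
  · have h0 : ∀ w : T.chi v, lam w * (lp.single 1 u a : ∀ _ : A, ℂ) w = 0 := by
      rintro ⟨w, hw1, hw2⟩
      have hwu : w ≠ u := by rintro rfl; exact hv hw2.symm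
      rw [lp.single_apply_ne _ _ _ hwu, mul_zero]
    rw [tsum_congr h0, tsum_zero]
    rw [lp.single_apply_ne]
    exact hv

lemma Bpow_single : ∀ (n : ℕ) (v u : A), u ∈ T.chiIter n v → ∀ a : ℂ,
    (B ^ n) (lp.single 1 u a) = lp.single 1 v (T.wt lam n u * a) := by
  intro n
  induction n with
  | zero =>
    intro v u hu a
    have huv : u = v := by simpa [chiIter] using hu
    subst huv
    simp [wt]
  | succ n ih =>
    intro v u hu a
    rw [mem_chiIter_iff] at hu
    have hur : u ≠ T.root := by simpa using hu.2 0 (by omega)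
    have hpu : T.par u ∈ T.chiIter n v := by
      rw [mem_chiIter_iff]
      refine ⟨by rw [← Function.iterate_succ_apply]; exact hu.1, fun k hk => ?_⟩
      rw [← Function.iterate_succ_apply]
      exact hu.2 (k + 1) (by omega)
    rw [pow_succ, ContinuousLinearMap.mul_apply, B_single T lam B hB u hur a,
      ih v (T.par u) hpu (lam u * a)]
    congr 1
    have hw : T.wt lam (n + 1) u = T.wt lam n (T.par u) * lam u := by
      unfold wt
      rw [Finset.prod_range_succ']
      simp [Function.iterate_succ_apply]
    rw [hw]; ring

lemma Bpow_single_zero : ∀ (n : ℕ) (u : A) (a : ℂ),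
    (∃ m < n, T.par^[m] u = T.root) → (B ^ n) (lp.single 1 u a) = 0 := by
  intro n
  induction n with
  | zero => rintro u a ⟨m, hm, -⟩; omega
  | succ n ih =>
    rintro u a ⟨m, hm, hroot⟩
    rw [pow_succ, ContinuousLinearMap.mul_apply]
    by_cases hur : u = T.root
    · subst hur
      rw [B_single_root T lam B hB, map_zero]
    · have hm1 : 1 ≤ m := by
        rcases Nat.eq_zero_or_pos m with h | h
        · subst h; simp at hroot; exact absurd hroot hur
        · exact h
      obtain ⟨m', rfl⟩ : ∃ m', m = m' + 1 := ⟨m - 1, by omega⟩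
      rw [B_single T lam B hB u hur a]
      refine ih _ _ ⟨m', by omega, ?_⟩
      rw [← Function.iterate_succ_apply]
      exact hroot

set_option linter.unusedSectionVars false

omit [DecidableEq A] hB in
lemma eval_abs_le (f : lp (fun _ : A => ℂ) 1) (v : A) : ‖(f : ∀ _ : A, ℂ) v‖ ≤ ‖f‖ :=
  lp.norm_apply_le_norm one_ne_zero f v

omit hB in
lemma single_apply' (i : A) (a : ℂ) (j : A) :
    (lp.single 1 i a : lp (fun _ : A => ℂ) 1) j = if j = i then a else 0 := by
  by_cases h : j = i
  · subst h; rw [lp.single_apply_self, if_pos rfl]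
  · rw [lp.single_apply_ne _ _ _ h, if_neg h]

omit hB in
lemma sum_single_apply (s : Finset A) (c : A → ℂ) (w : A) :
    ((∑ u ∈ s, lp.single 1 u (c u) : lp (fun _ : A => ℂ) 1) : ∀ _ : A, ℂ) w
      = if w ∈ s then c w else 0 := by
  simp only [lp.coeFn_sum, Finset.sum_apply, single_apply', Finset.sum_ite_eq]

omit [DecidableEq A] hB in
lemma sum_le_norm (f : lp (fun _ : A => ℂ) 1) (s : Finset A) :
    ∑ u ∈ s, ‖(f : ∀ _ : A, ℂ) u‖ ≤ ‖f‖ := by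
  have := lp.sum_rpow_le_norm_rpow (by norm_num : 0 < (1 : ℝ≥0∞).toReal) f s
  simpa using this

omit hB in
lemma exists_trunc (f : lp (fun _ : A => ℂ) 1) {ε : ℝ} (hε : 0 < ε) :
    ∃ s : Finset A, ‖(∑ u ∈ s, lp.single 1 u ((f : ∀ _ : A, ℂ) u)) - f‖ < ε := by
  have h := lp.hasSum_single (by norm_num : (1 : ℝ≥0∞) ≠ ⊤) f
  have h2 := Metric.tendsto_nhds.1 h ε hε
  obtain ⟨s, hs⟩ := h2.exists
  exact ⟨s, by rwa [dist_eq_norm] at hs⟩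

lemma Bpow_apply_bound (n : ℕ) (v : A) (W : ℝ) (hW : 0 ≤ W)
    (h : ∀ u ∈ T.chiIter n v, ‖T.wt lam n u‖ ≤ W) (f : lp (fun _ : A => ℂ) 1) :
    ‖((B ^ n) f : ∀ _ : A, ℂ) v‖ ≤ W * ‖f‖ := by
  have key : ∀ s : Finset A,
      ‖((B ^ n) (∑ u ∈ s, lp.single 1 u ((f : ∀ _ : A, ℂ) u)) : ∀ _ : A, ℂ) v‖
        ≤ W * ‖f‖ := by
    intro s
    rw [map_sum]
    have hterm : ∀ u ∈ s,
        ‖(((B ^ n) (lp.single 1 u ((f : ∀ _ : A, ℂ) u))) : ∀ _ : A, ℂ) v‖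
          ≤ W * ‖(f : ∀ _ : A, ℂ) u‖ := by
      intro u _
      by_cases hroot : ∃ m < n, T.par^[m] u = T.root
      · rw [Bpow_single_zero T lam B hB n u _ hroot]
        have : ((0 : lp (fun _ : A => ℂ) 1) : ∀ _ : A, ℂ) v = 0 := by
          rw [lp.coeFn_zero]; rfl
        rw [this, norm_zero]
        positivity
      · push_neg at hroot
        have hu : u ∈ T.chiIter n (T.par^[n] u) := by
          rw [mem_chiIter_iff]
          exact ⟨rfl, fun k hk => hroot k hk⟩
        rw [Bpow_single T lam B hB n _ u hu, single_apply']
        by_cases hv : v = T.par^[n] u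
        · rw [if_pos hv, norm_mul]
          have huv : u ∈ T.chiIter n v := by rw [hv]; exact hu
          exact mul_le_mul_of_nonneg_right (h u huv) (norm_nonneg _)
        · rw [if_neg hv, norm_zero]
          positivity
    rw [lp.coeFn_sum]
    calc ‖(∑ u ∈ s, (((B ^ n) (lp.single 1 u ((f : ∀ _ : A, ℂ) u))) : ∀ _ : A, ℂ)) v‖
        = ‖∑ u ∈ s, (((B ^ n) (lp.single 1 u ((f : ∀ _ : A, ℂ) u))) : ∀ _ : A, ℂ) v‖ := by
          rw [Finset.sum_apply]
      _ ≤ ∑ u ∈ s, ‖(((B ^ n) (lp.single 1 u ((f : ∀ _ : A, ℂ) u))) : ∀ _ : A, ℂ) v‖ :=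
          norm_sum_le _ _
      _ ≤ ∑ u ∈ s, W * ‖(f : ∀ _ : A, ℂ) u‖ := Finset.sum_le_sum hterm
      _ = W * ∑ u ∈ s, ‖(f : ∀ _ : A, ℂ) u‖ := by rw [Finset.mul_sum]
      _ ≤ W * ‖f‖ := mul_le_mul_of_nonneg_left (sum_le_norm f s) hW
  have hlim : Filter.Tendsto
      (fun s : Finset A =>
        ‖((B ^ n) (∑ u ∈ s, lp.single 1 u ((f : ∀ _ : A, ℂ) u)) : ∀ _ : A, ℂ) v‖)
      Filter.atTop (𝓝 ‖((B ^ n) f : ∀ _ : A, ℂ) v‖) := by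
    have h1 := lp.hasSum_single (by norm_num : (1 : ℝ≥0∞) ≠ ⊤) f
    have h2 : Filter.Tendsto
        (fun s : Finset A => (B ^ n) (∑ u ∈ s, lp.single 1 u ((f : ∀ _ : A, ℂ) u)))
        Filter.atTop (𝓝 ((B ^ n) f)) := ((B ^ n).continuous.tendsto _).comp h1
    have h3 : Filter.Tendsto
        (fun g : lp (fun _ : A => ℂ) 1 => ‖(g : ∀ _ : A, ℂ) v‖)
        (𝓝 ((B ^ n) f)) (𝓝 ‖((B ^ n) f : ∀ _ : A, ℂ) v‖) := by
      have hlip : LipschitzWith 1 (fun g : lp (fun _ : A => ℂ) 1 => (g : ∀ _ : A, ℂ) v) := by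
        refine LipschitzWith.of_dist_le_mul fun g₁ g₂ => ?_
        rw [dist_eq_norm, dist_eq_norm, NNReal.coe_one, one_mul]
        have : ((g₁ - g₂ : lp (fun _ : A => ℂ) 1) : ∀ _ : A, ℂ) v
            = (g₁ : ∀ _ : A, ℂ) v - (g₂ : ∀ _ : A, ℂ) v := by
          rw [lp.coeFn_sub]; rfl
        rw [← this]
        exact eval_abs_le _ v
      exact (continuous_norm.comp hlip.continuous).tendsto _
    exact h3.comp h2
  exact le_of_tendsto hlim (Filter.Eventually.of_forall key)

lemma key_weights (f₀ : lp (fun _ : A => ℂ) 1)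
    (hf₀ : Dense (Set.range fun n : ℕ => (B ^ n) f₀))
    (F : Finset A) (M : ℝ) (N : ℕ) :
    ∃ n, N ≤ n ∧ ∀ v ∈ F, ∃ u ∈ T.chiIter n v, M ≤ ‖T.wt lam n u‖ := by
  rcases F.eq_empty_or_nonempty with rfl | ⟨v₀, hv₀⟩
  · exact ⟨N, le_rfl, by simp⟩
  set M' := max M 0 with hM'
  have hM'0 : 0 ≤ M' := le_max_right _ _
  set K : ℝ := M' * ‖f₀‖ + 2 + ∑ j ∈ Finset.range (N + 1), ‖(B ^ j) f₀‖ with hK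
  have hKlb : M' * ‖f₀‖ + 2 ≤ K := by
    have : (0:ℝ) ≤ ∑ j ∈ Finset.range (N + 1), ‖(B ^ j) f₀‖ :=
      Finset.sum_nonneg fun j _ => norm_nonneg _
    linarith
  have hKjb : ∀ j ≤ N, ‖(B ^ j) f₀‖ + 2 ≤ K := by
    intro j hj
    have h1 : ‖(B ^ j) f₀‖ ≤ ∑ i ∈ Finset.range (N + 1), ‖(B ^ i) f₀‖ :=
      Finset.single_le_sum (f := fun i => ‖(B ^ i) f₀‖) (fun i _ => norm_nonneg _)
        (Finset.mem_range.2 (Nat.lt_succ_of_le hj))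
    have h2 : (0:ℝ) ≤ M' * ‖f₀‖ := mul_nonneg hM'0 (norm_nonneg _)
    linarith
  set y : lp (fun _ : A => ℂ) 1 := ∑ v ∈ F, lp.single 1 v ((K : ℂ)) with hy
  obtain ⟨n, hn⟩ := Metric.denseRange_iff.1 hf₀ y 1 one_pos
  rw [dist_eq_norm] at hn
  have hcoord : ∀ v ∈ F, ‖((B ^ n) f₀ : ∀ _ : A, ℂ) v - (K : ℂ)‖ < 1 := by
    intro v hv
    have h1 : (((y - (B ^ n) f₀) : lp (fun _ : A => ℂ) 1) : ∀ _ : A, ℂ) v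
        = (y : ∀ _ : A, ℂ) v - ((B ^ n) f₀ : ∀ _ : A, ℂ) v := by rw [lp.coeFn_sub]; rfl
    have h2 := eval_abs_le (y - (B ^ n) f₀) v
    rw [h1] at h2
    have h3 : (y : ∀ _ : A, ℂ) v = (K : ℂ) := by
      rw [hy, sum_single_apply, if_pos hv]
    rw [h3] at h2
    have h4 : ‖(K : ℂ) - ((B ^ n) f₀ : ∀ _ : A, ℂ) v‖ < 1 := lt_of_le_of_lt h2 hn
    rwa [norm_sub_rev] at h4
  have hKnorm : ‖(K : ℂ)‖ = K := by
    rw [Complex.norm_real]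
    have : (0:ℝ) ≤ K := by
      have h2 : (0:ℝ) ≤ M' * ‖f₀‖ := mul_nonneg hM'0 (norm_nonneg _)
      linarith [hKlb]
    exact abs_of_nonneg this
  have hbig2 : ∀ v ∈ F, K - 1 < ‖((B ^ n) f₀ : ∀ _ : A, ℂ) v‖ := by
    intro v hv
    have h1 := hcoord v hv
    have h2 : ‖(K : ℂ)‖ - ‖((B ^ n) f₀ : ∀ _ : A, ℂ) v‖ ≤
        ‖((B ^ n) f₀ : ∀ _ : A, ℂ) v - (K : ℂ)‖ := by
      rw [norm_sub_rev]
      exact norm_sub_norm_le _ _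
    rw [hKnorm] at h2
    linarith
  have hbig : ∀ v ∈ F, M' * ‖f₀‖ + 1 < ‖((B ^ n) f₀ : ∀ _ : A, ℂ) v‖ := by
    intro v hv
    have := hbig2 v hv
    linarith [hKlb]
  have hnN : N ≤ n := by
    by_contra hcon
    push_neg at hcon
    have h1 := hbig2 v₀ hv₀
    have h2 := eval_abs_le ((B ^ n) f₀) v₀
    have h3 := hKjb n (by omega)
    linarith
  refine ⟨n, hnN, fun v hv => ?_⟩
  by_contra hcon
  push_neg at hcon
  have hbound : ∀ u ∈ T.chiIter n v, ‖T.wt lam n u‖ ≤ M' := by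
    intro u hu
    exact le_trans (le_of_lt (hcon u hu)) (le_max_left _ _)
  have := Bpow_apply_bound T lam B hB n v M' hM'0 hbound f₀
  linarith [hbig v hv]

omit hB in
lemma pmul_zero' (x : lp (fun _ : A => ℂ) 1) : pmul x 0 = 0 := by
  apply lp.ext; funext v
  have : ((0 : lp (fun _ : A => ℂ) 1) : ∀ _ : A, ℂ) v = 0 := by rw [lp.coeFn_zero]; rfl
  simp [pmul_apply, this]

omit hB in
lemma zero_pmul' (x : lp (fun _ : A => ℂ) 1) : pmul 0 x = 0 := by
  apply lp.ext; funext v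
  have : ((0 : lp (fun _ : A => ℂ) 1) : ∀ _ : A, ℂ) v = 0 := by rw [lp.coeFn_zero]; rfl
  simp [pmul_apply, this]

omit hB in
lemma pmul_ppow (f : lp (fun _ : A => ℂ) 1) (i j : ℕ) :
    pmul (ppow f i) (ppow f j) = ppow f (i + j + 1) := by
  apply lp.ext; funext v
  simp only [pmul_apply, ppow_apply]
  rw [← pow_add]
  congr 1
  omega

omit hB in
/-- the open sets used in the Baire category argument -/
def Omg (y : ℕ → lp (fun _ : A => ℂ) 1) (m M k i : ℕ) : Set (lp (fun _ : A => ℂ) 1) :=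
  {f | ∃ n : ℕ, ‖(B ^ n) (ppow f m) - y k‖ < 1/((i:ℝ)+1) ∧
    ∀ j, m < j → j ≤ M → ‖(B ^ n) (ppow f j)‖ < 1/((i:ℝ)+1)}

omit hB in
lemma isOpen_Omg (y : ℕ → lp (fun _ : A => ℂ) 1) (m M k i : ℕ) :
    IsOpen (Omg B y m M k i) := by
  have hrw : Omg B y m M k i = ⋃ n : ℕ,
      ((fun f : lp (fun _ : A => ℂ) 1 => (B ^ n) (ppow f m)) ⁻¹'
        Metric.ball (y k) (1/((i:ℝ)+1))) ∩
      (⋂ j ∈ Finset.Ioc m M, (fun f : lp (fun _ : A => ℂ) 1 => (B ^ n) (ppow f j)) ⁻¹'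
        Metric.ball 0 (1/((i:ℝ)+1))) := by
    ext f
    simp only [Omg, Set.mem_setOf_eq, Set.mem_iUnion, Set.mem_inter_iff, Set.mem_preimage,
      Metric.mem_ball, dist_eq_norm, Set.mem_iInter, Finset.mem_Ioc, sub_zero]
    constructor
    · rintro ⟨n, h1, h2⟩; exact ⟨n, h1, fun j hj => h2 j hj.1 hj.2⟩
    · rintro ⟨n, h1, h2⟩; exact ⟨n, h1, fun j hj1 hj2 => h2 j ⟨hj1, hj2⟩⟩
  rw [hrw]
  refine isOpen_iUnion fun n => IsOpen.inter ?_ ?_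
  · exact Metric.isOpen_ball.preimage ((B ^ n).continuous.comp (continuous_ppow m))
  · exact isOpen_biInter_finset fun j _ =>
      Metric.isOpen_ball.preimage ((B ^ n).continuous.comp (continuous_ppow j))

lemma dense_Omg (hlam : ∀ v, lam v ≠ 0) (f₀ : lp (fun _ : A => ℂ) 1)
    (hf₀ : Dense (Set.range fun n : ℕ => (B ^ n) f₀)) (m M k i : ℕ) :
    Dense (Omg B (fun k => (B ^ k) f₀) m M k i) := by
  rw [Metric.dense_iff]
  intro h ε hε
  set δ : ℝ := 1/((i:ℝ)+1) with hδdef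
  have hδ : 0 < δ := by positivity
  obtain ⟨s, hs⟩ := exists_trunc h (half_pos hε)
  set t : lp (fun _ : A => ℂ) 1 := ∑ u ∈ s, lp.single 1 u ((h : ∀ _ : A, ℂ) u) with ht
  set yk : lp (fun _ : A => ℂ) 1 := (B ^ k) f₀ with hykdef
  obtain ⟨F, hF⟩ := exists_trunc yk (half_pos hδ)
  set y' : lp (fun _ : A => ℂ) 1 := ∑ v ∈ F, lp.single 1 v ((yk : ∀ _ : A, ℂ) v) with hy'
  set Y : ℝ := ∑ v ∈ F, ‖(yk : ∀ _ : A, ℂ) v‖ with hY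
  have hY0 : 0 ≤ Y := Finset.sum_nonneg fun _ _ => norm_nonneg _
  set ρ : ℝ := min 1 (min (ε/(2*((F.card:ℝ)+1))) (δ/(2*(Y+1)))) with hρdef
  have hρ : 0 < ρ := by
    refine lt_min one_pos (lt_min (by positivity) (by positivity))
  have hρ1 : ρ ≤ 1 := min_le_left _ _
  have hρε : ρ ≤ ε/(2*((F.card:ℝ)+1)) := le_trans (min_le_right _ _) (min_le_left _ _)
  have hρδ : ρ ≤ δ/(2*(Y+1)) := le_trans (min_le_right _ _) (min_le_right _ _)
  set Wb : ℝ := (Y+1)/ρ^(m+1) with hWbdef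
  have hWbpos : 0 < Wb := by positivity
  set N : ℕ := 1 + s.sup (fun u => Nat.find (T.reaches u)) with hNdef
  obtain ⟨n, hnN, hwt⟩ := key_weights T lam B hB f₀ hf₀ F Wb N
  have hch : ∀ v : A, ∃ u : A, v ∈ F → (u ∈ T.chiIter n v ∧ Wb ≤ ‖T.wt lam n u‖) := by
    intro v
    by_cases hv : v ∈ F
    · obtain ⟨u, hu1, hu2⟩ := hwt v hv
      exact ⟨u, fun _ => ⟨hu1, hu2⟩⟩
    · exact ⟨v, fun hvF => absurd hvF hv⟩
  choose uc huc using hch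
  have hroots : ∀ v : A, ∃ a : ℂ,
      a^(m+1) = (yk : ∀ _ : A, ℂ) v / T.wt lam n (uc v) :=
    fun v => Complex.isAlgClosed.exists_pow_nat_eq _ (Nat.succ_pos m)
  choose a ha using hroots
  set g : lp (fun _ : A => ℂ) 1 := ∑ v ∈ F, lp.single 1 (uc v) (a v) with hg
  have hwtne : ∀ v : A, T.wt lam n (uc v) ≠ 0 := fun v => wt_ne_zero T lam hlam n (uc v)
  have hanorm : ∀ v ∈ F, ‖T.wt lam n (uc v)‖ * ‖a v‖^(m+1) = ‖(yk : ∀ _ : A, ℂ) v‖ := by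
    intro v hv
    rw [← norm_pow, ← norm_mul, ha v, mul_div_cancel₀ _ (hwtne v)]
  have haρ : ∀ v ∈ F, ‖a v‖ ≤ ρ := by
    intro v hv
    have h2 : ‖(yk : ∀ _ : A, ℂ) v‖ ≤ Y :=
      Finset.single_le_sum (f := fun v => ‖(yk : ∀ _ : A, ℂ) v‖) (fun _ _ => norm_nonneg _) hv
    have h3 : Wb ≤ ‖T.wt lam n (uc v)‖ := (huc v hv).2
    have hρp : (0:ℝ) < ρ^(m+1) := pow_pos hρ _
    have h5 : Wb * ‖a v‖^(m+1) ≤ Y + 1 := by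
      have h5a := mul_le_mul_of_nonneg_right h3 (pow_nonneg (norm_nonneg (a v)) (m+1))
      rw [hanorm v hv] at h5a
      linarith
    have hWb' : Wb * ρ^(m+1) = Y + 1 := by
      rw [hWbdef]; field_simp
    have h6 : (Y+1) * ‖a v‖^(m+1) ≤ (Y+1) * ρ^(m+1) := by
      have hq : Wb * ‖a v‖^(m+1) * ρ^(m+1) ≤ (Y+1) * ρ^(m+1) :=
        mul_le_mul_of_nonneg_right h5 hρp.le
      calc (Y+1) * ‖a v‖^(m+1) = Wb * ρ^(m+1) * ‖a v‖^(m+1) := by rw [hWb']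
        _ = Wb * ‖a v‖^(m+1) * ρ^(m+1) := by ring
        _ ≤ (Y+1) * ρ^(m+1) := hq
    have h4 : ‖a v‖^(m+1) ≤ ρ^(m+1) :=
      (mul_le_mul_iff_right₀ (show (0:ℝ) < Y+1 by linarith)).1 h6
    exact (pow_le_pow_iff_left₀ (norm_nonneg _) hρ.le (Nat.succ_ne_zero m)).1 h4
  have htc : ∀ w, (t : ∀ _ : A, ℂ) w = if w ∈ s then (h : ∀ _ : A, ℂ) w else 0 :=
    fun w => sum_single_apply s _ w
  have hgc : ∀ w, (g : ∀ _ : A, ℂ) w = ∑ v ∈ F, (if w = uc v then a v else 0) := by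
    intro w
    rw [hg, lp.coeFn_sum, Finset.sum_apply]
    exact Finset.sum_congr rfl fun v _ => single_apply' _ _ _
  have hucF : ∀ v ∈ F, uc v ∈ T.chiIter n v := fun v hv => (huc v hv).1
  have hpar : ∀ v ∈ F, T.par^[n] (uc v) = v :=
    fun v hv => ((mem_chiIter_iff T n v (uc v)).1 (hucF v hv)).1
  have hdeep : ∀ v ∈ F, ∀ k' < n, T.par^[k'] (uc v) ≠ T.root :=
    fun v hv => ((mem_chiIter_iff T n v (uc v)).1 (hucF v hv)).2
  have hsroot : ∀ u ∈ s, Nat.find (T.reaches u) < n := by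
    intro u hu
    have h1 : Nat.find (T.reaches u) ≤ s.sup (fun u => Nat.find (T.reaches u)) :=
      Finset.le_sup (f := fun u => Nat.find (T.reaches u)) hu
    omega
  have hucs : ∀ v ∈ F, uc v ∉ s := by
    intro v hv hmem
    exact hdeep v hv _ (hsroot _ hmem) (Nat.find_spec (T.reaches (uc v)))
  have hdisj : ∀ w, (t : ∀ _ : A, ℂ) w = 0 ∨ (g : ∀ _ : A, ℂ) w = 0 := by
    intro w
    by_cases hw : w ∈ s
    · right
      rw [hgc]
      refine Finset.sum_eq_zero fun v hv => ?_
      rw [if_neg]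
      rintro rfl
      exact hucs v hv hw
    · left
      rw [htc, if_neg hw]
  set f : lp (fun _ : A => ℂ) 1 := t + g with hfdef
  have hsplit : ∀ j : ℕ, ppow f j = ppow t j + ppow g j := by
    intro j
    apply lp.ext; funext w
    rw [lp.coeFn_add]
    simp only [Pi.add_apply, ppow_apply]
    have hfw : (f : ∀ _ : A, ℂ) w = (t : ∀ _ : A, ℂ) w + (g : ∀ _ : A, ℂ) w := by
      rw [hfdef, lp.coeFn_add]; rfl
    rw [hfw]
    rcases hdisj w with h0 | h0 <;> rw [h0] <;>
      simp [zero_pow (Nat.succ_ne_zero j)]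
  have hptj : ∀ j : ℕ, ppow t j = ∑ u ∈ s, lp.single 1 u (((h : ∀ _ : A, ℂ) u)^(j+1)) := by
    intro j
    apply lp.ext; funext w
    rw [ppow_apply]
    have hr : ((∑ u ∈ s, lp.single 1 u (((h : ∀ _ : A, ℂ) u)^(j+1)) :
        lp (fun _ : A => ℂ) 1) : ∀ _ : A, ℂ) w
        = if w ∈ s then ((h : ∀ _ : A, ℂ) w)^(j+1) else 0 := sum_single_apply s _ w
    rw [hr, htc]
    by_cases hw : w ∈ s
    · rw [if_pos hw, if_pos hw]
    · rw [if_neg hw, if_neg hw, zero_pow (Nat.succ_ne_zero j)]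
  have hBt : ∀ j : ℕ, (B ^ n) (ppow t j) = 0 := by
    intro j
    rw [hptj, map_sum]
    refine Finset.sum_eq_zero fun u hu => ?_
    exact Bpow_single_zero T lam B hB n u _
      ⟨Nat.find (T.reaches u), hsroot u hu, Nat.find_spec (T.reaches u)⟩
  have hinj : ∀ v ∈ F, ∀ v' ∈ F, uc v = uc v' → v = v' := by
    intro v hv v' hv' he
    rw [← hpar v hv, ← hpar v' hv', he]
  have hpgj : ∀ j : ℕ, ppow g j = ∑ v ∈ F, lp.single 1 (uc v) ((a v)^(j+1)) := by
    intro j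
    apply lp.ext; funext w
    rw [ppow_apply]
    have hrhs : ((∑ v ∈ F, lp.single 1 (uc v) ((a v)^(j+1)) :
        lp (fun _ : A => ℂ) 1) : ∀ _ : A, ℂ) w
        = ∑ v ∈ F, (if w = uc v then (a v)^(j+1) else 0) := by
      rw [lp.coeFn_sum, Finset.sum_apply]
      exact Finset.sum_congr rfl fun v _ => single_apply' _ _ _
    rw [hrhs, hgc]
    by_cases hw : ∃ v ∈ F, w = uc v
    · obtain ⟨v₀, hv₀, rfl⟩ := hw
      rw [Finset.sum_eq_single_of_mem v₀ hv₀
          (fun v hv hne => if_neg (fun he => hne (hinj v hv v₀ hv₀ he.symm))),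
        Finset.sum_eq_single_of_mem v₀ hv₀
          (fun v hv hne => if_neg (fun he => hne (hinj v hv v₀ hv₀ he.symm))),
        if_pos rfl, if_pos rfl]
    · push_neg at hw
      rw [Finset.sum_eq_zero (fun v hv => if_neg (hw v hv)),
        Finset.sum_eq_zero (fun v hv => if_neg (hw v hv)),
        zero_pow (Nat.succ_ne_zero j)]
  have hBg : ∀ j : ℕ, (B ^ n) (ppow g j)
      = ∑ v ∈ F, lp.single 1 v (T.wt lam n (uc v) * (a v)^(j+1)) := by
    intro j
    rw [hpgj, map_sum]
    exact Finset.sum_congr rfl fun v hv => Bpow_single T lam B hB n v (uc v) (hucF v hv) _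
  have hBm : (B ^ n) (ppow f m) = y' := by
    rw [hsplit, map_add, hBt, hBg, zero_add, hy']
    refine Finset.sum_congr rfl fun v hv => ?_
    congr 1
    rw [ha v, mul_div_cancel₀ _ (hwtne v)]
  refine ⟨f, Metric.mem_ball.2 ?_, n, ?_, ?_⟩
  · -- dist f h < ε
    rw [dist_eq_norm]
    have h1 : f - h = (t - h) + g := by rw [hfdef]; abel
    have h2 : ‖g‖ ≤ ∑ v ∈ F, ‖a v‖ := by
      rw [hg]
      refine le_trans (norm_sum_le _ _) (le_of_eq ?_)
      refine Finset.sum_congr rfl fun v _ => ?_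
      exact lp.norm_single (p := 1) (E := fun _ : A => ℂ) (by norm_num) (uc v) (a v)
    have h3 : ∑ v ∈ F, ‖a v‖ ≤ (F.card : ℝ) * ρ := by
      calc ∑ v ∈ F, ‖a v‖ ≤ ∑ _v ∈ F, ρ := Finset.sum_le_sum haρ
        _ = (F.card : ℝ) * ρ := by rw [Finset.sum_const, nsmul_eq_mul]
    have h4 : (F.card : ℝ) * ρ < ε/2 := by
      have h5 : (F.card : ℝ) * ρ ≤ (F.card : ℝ) * (ε/(2*((F.card:ℝ)+1))) :=
        mul_le_mul_of_nonneg_left hρε (Nat.cast_nonneg _)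
      have h6 : (0:ℝ) ≤ (F.card : ℝ) := Nat.cast_nonneg _
      have h7 : (F.card : ℝ) * (ε/(2*((F.card:ℝ)+1))) < ε/2 := by
        rw [mul_div_assoc', div_lt_div_iff₀ (by positivity) two_pos]
        nlinarith
      linarith
    calc ‖f - h‖ = ‖(t - h) + g‖ := by rw [h1]
      _ ≤ ‖t - h‖ + ‖g‖ := norm_add_le _ _
      _ < ε/2 + ε/2 := by
          refine add_lt_add_of_lt_of_le hs (le_trans h2 (le_trans h3 h4.le))
      _ = ε := by ring
  · -- first condition
    rw [hBm]
    calc ‖y' - yk‖ < δ/2 := hF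
      _ < δ := by linarith
  · -- second condition
    intro j hj1 hj2
    rw [hsplit, map_add, hBt, zero_add, hBg]
    have hterm : ∀ v ∈ F, ‖T.wt lam n (uc v) * (a v)^(j+1)‖
        ≤ ‖(yk : ∀ _ : A, ℂ) v‖ * ρ := by
      intro v hv
      have e1 : j + 1 = (m + 1) + (j - m) := by omega
      have e2 : ‖T.wt lam n (uc v) * (a v)^(j+1)‖
          = (‖T.wt lam n (uc v)‖ * ‖a v‖^(m+1)) * ‖a v‖^(j-m) := by
        rw [norm_mul, norm_pow, e1, pow_add]
        ring
      rw [e2, hanorm v hv]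
      refine mul_le_mul_of_nonneg_left ?_ (norm_nonneg _)
      have hjm : j - m ≠ 0 := by omega
      calc ‖a v‖^(j-m) ≤ ‖a v‖ :=
            pow_le_of_le_one (norm_nonneg _) (le_trans (haρ v hv) hρ1) hjm
        _ ≤ ρ := haρ v hv
    calc ‖∑ v ∈ F, lp.single 1 v (T.wt lam n (uc v) * (a v)^(j+1))‖
        ≤ ∑ v ∈ F, ‖T.wt lam n (uc v) * (a v)^(j+1)‖ := by
          refine le_trans (norm_sum_le _ _) (le_of_eq ?_)
          refine Finset.sum_congr rfl fun v _ => ?_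
          exact lp.norm_single (by norm_num) v _
      _ ≤ ∑ v ∈ F, ‖(yk : ∀ _ : A, ℂ) v‖ * ρ := Finset.sum_le_sum hterm
      _ = Y * ρ := by rw [← Finset.sum_mul]
      _ ≤ Y * (δ/(2*(Y+1))) := mul_le_mul_of_nonneg_left hρδ hY0
      _ < δ := by
          rw [mul_div_assoc', div_lt_iff₀ (by positivity)]
          nlinarith
end Stmt8Aux

open Stmt8Aux in
/-- Any bounded hypercyclic weighted backward shift on `ℓ¹(A)` over a
rooted directed tree supports a hypercyclic algebra for the coordinatewise product: there
is a nonzero subalgebra of `ℓ¹(A)` (closed under addition, scalar multiplication and the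
coordinatewise product) all of whose nonzero elements are hypercyclic vectors. -/
theorem stmt8 {A : Type*} [Countable A] (T : DirTree A)
    (hleaf : ∀ v : A, (T.chi v).Nonempty)
    (lam : A → ℂ) (hlam : ∀ v, lam v ≠ 0)
    (B : lp (fun _ : A => ℂ) 1 →L[ℂ] lp (fun _ : A => ℂ) 1) (hB : T.IsWBS lam B)
    (hhc : ∃ f : lp (fun _ : A => ℂ) 1, Dense (Set.range fun n : ℕ => (B ^ n) f)) :
    ∃ S : Set (lp (fun _ : A => ℂ) 1),
      (∃ f ∈ S, f ≠ 0) ∧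
      (∀ f ∈ S, ∀ g ∈ S, f + g ∈ S) ∧
      (∀ c : ℂ, ∀ f ∈ S, c • f ∈ S) ∧
      (∀ f ∈ S, ∀ g ∈ S, ∃ h ∈ S, ∀ v : A,
        (h : ∀ _ : A, ℂ) v = (f : ∀ _ : A, ℂ) v * (g : ∀ _ : A, ℂ) v) ∧
      (∀ f ∈ S, f ≠ 0 → Dense (Set.range fun n : ℕ => (B ^ n) f)) := by
  letI : DecidableEq A := Classical.decEq A
  obtain ⟨f₀, hf₀⟩ := hhc
  haveI : Nonempty (lp (fun _ : A => ℂ) 1) := ⟨0⟩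
  have hG : Dense (⋂ q : ℕ×ℕ×ℕ×ℕ,
      Omg B (fun k => (B ^ k) f₀) q.1 q.2.1 q.2.2.1 q.2.2.2) :=
    dense_iInter_of_isOpen (fun q => isOpen_Omg B _ _ _ _ _)
      (fun q => dense_Omg T lam B hB hlam f₀ hf₀ _ _ _ _)
  obtain ⟨f, hfG⟩ := hG.nonempty
  have hfO : ∀ m M k i : ℕ, f ∈ Omg B (fun k => (B ^ k) f₀) m M k i := by
    intro m M k i
    exact Set.mem_iInter.1 hfG (m, M, k, i)
  -- f is nonzero
  have hfne : f ≠ 0 := by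
    intro hf0
    have hz : ‖(lp.single 1 T.root (2:ℂ) : lp (fun _ : A => ℂ) 1)‖ = 2 := by
      have h := lp.norm_single (p := 1) (E := fun _ : A => ℂ) (by norm_num)
        T.root (2:ℂ)
      simpa using h
    obtain ⟨k, hk⟩ := Metric.denseRange_iff.1 hf₀ (lp.single 1 T.root (2:ℂ)) 1 one_pos
    obtain ⟨n, h1, -⟩ := hfO 0 0 k 0
    rw [hf0] at h1
    have hpz : ppow (0 : lp (fun _ : A => ℂ) 1) 0 = 0 := rfl
    rw [hpz, map_zero, zero_sub, norm_neg] at h1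
    norm_num at h1
    have h1' : ‖(B ^ k) f₀‖ < 1 := by simpa using h1
    rw [dist_eq_norm] at hk
    have h3 := norm_sub_norm_le (lp.single 1 T.root (2:ℂ)) ((B ^ k) f₀)
    rw [hz] at h3
    linarith
  set V : Submodule ℂ (lp (fun _ : A => ℂ) 1) :=
    Submodule.span ℂ (Set.range fun j : ℕ => ppow f j) with hV
  refine ⟨↑V, ⟨f, Submodule.subset_span ⟨0, rfl⟩, hfne⟩,
    fun x hx g hg => V.add_mem hx hg, fun c x hx => V.smul_mem c hx, ?_, ?_⟩
  · -- closure under coordinatewise products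
    have hgen : ∀ (jx : ℕ), ∀ z ∈ V, pmul (ppow f jx) z ∈ V := by
      intro jx z hz
      refine Submodule.span_induction ?_ ?_ ?_ ?_ hz
      · rintro w ⟨jw, rfl⟩
        rw [pmul_ppow]
        exact Submodule.subset_span ⟨jx + jw + 1, rfl⟩
      · rw [pmul_zero']; exact V.zero_mem
      · intro u w hu hw h1 h2
        rw [pmul_add]; exact V.add_mem h1 h2
      · intro cc u hu h1
        rw [pmul_smul]; exact V.smul_mem cc h1
    have hmulV : ∀ x ∈ V, ∀ z ∈ V, pmul x z ∈ V := by
      intro x hx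
      refine Submodule.span_induction ?_ ?_ ?_ ?_ hx
      · rintro w ⟨jw, rfl⟩; exact hgen jw
      · intro z hz; rw [zero_pmul']; exact V.zero_mem
      · intro u w hu hw h1 h2 z hz
        rw [add_pmul]; exact V.add_mem (h1 z hz) (h2 z hz)
      · intro cc u hu h1 z hz
        rw [smul_pmul]; exact V.smul_mem cc (h1 z hz)
    intro x hx z hz
    exact ⟨pmul x z, hmulV x hx z hz, fun v => rfl⟩
  · -- all nonzero members are hypercyclic
    intro x hxS hxne
    have hx : x ∈ V := hxS
    rw [hV, Finsupp.mem_span_range_iff_exists_finsupp] at hx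
    obtain ⟨c, hc⟩ := hx
    have hcne : c.support.Nonempty := by
      rcases Finset.eq_empty_or_nonempty c.support with he | hne
      · exfalso
        apply hxne
        rw [← hc, Finsupp.support_eq_empty.1 he, Finsupp.sum_zero_index]
      · exact hne
    set m := c.support.min' hcne with hm
    set Mx := c.support.max' hcne with hMx
    have hmmem : m ∈ c.support := c.support.min'_mem hcne
    have hcm : c m ≠ 0 := Finsupp.mem_support_iff.1 hmmem
    show DenseRange fun n : ℕ => (B ^ n) x
    rw [Metric.denseRange_iff]
    intro z ε hε
    set Csum : ℝ := ∑ j ∈ c.support, ‖c j‖ with hCs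
    have hC0 : 0 ≤ Csum := Finset.sum_nonneg fun _ _ => norm_nonneg _
    have hcmp : 0 < ‖c m‖ := norm_pos_iff.2 hcm
    set ε' : ℝ := ε / (2*Csum + 2*‖c m‖ + 1) with he'
    have hε' : 0 < ε' := div_pos hε (by linarith)
    obtain ⟨k, hk⟩ := Metric.denseRange_iff.1 hf₀ ((c m)⁻¹ • z) ε' hε'
    obtain ⟨i, hi⟩ := exists_nat_one_div_lt hε'
    obtain ⟨n, h1, h2⟩ := hfO m Mx k i
    set δ : ℝ := 1/((i:ℝ)+1) with hδdef
    have hδε' : δ < ε' := hi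
    have hδ0 : 0 ≤ δ := by positivity
    refine ⟨n, ?_⟩
    rw [dist_eq_norm, norm_sub_rev]
    have hBx : (B ^ n) x = ∑ j ∈ c.support, c j • (B ^ n) (ppow f j) := by
      rw [← hc, Finsupp.sum, map_sum]
      exact Finset.sum_congr rfl fun j _ => by rw [map_smul]
    have hsplit : (B ^ n) x - z =
        (c m • (B ^ n) (ppow f m) - c m • ((B ^ k) f₀))
        + (c m • ((B ^ k) f₀) - z)
        + ∑ j ∈ c.support.erase m, c j • (B ^ n) (ppow f j) := by
      rw [hBx, ← Finset.add_sum_erase _ _ hmmem]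
      abel
    rw [hsplit]
    have e1 : ‖c m • (B ^ n) (ppow f m) - c m • ((B ^ k) f₀)‖ ≤ ‖c m‖ * δ := by
      rw [← smul_sub, norm_smul]
      exact mul_le_mul_of_nonneg_left h1.le (norm_nonneg _)
    have e2 : ‖c m • ((B ^ k) f₀) - z‖ ≤ ‖c m‖ * ε' := by
      have heq : c m • ((B ^ k) f₀) - z = c m • (((B ^ k) f₀) - (c m)⁻¹ • z) := by
        rw [smul_sub, smul_inv_smul₀ hcm]
      rw [heq, norm_smul]
      refine mul_le_mul_of_nonneg_left ?_ (norm_nonneg _)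
      rw [dist_eq_norm] at hk
      rw [norm_sub_rev]
      exact hk.le
    have e3 : ‖∑ j ∈ c.support.erase m, c j • (B ^ n) (ppow f j)‖ ≤ Csum * δ := by
      refine le_trans (norm_sum_le _ _) ?_
      have hterm : ∀ j ∈ c.support.erase m,
          ‖c j • (B ^ n) (ppow f j)‖ ≤ ‖c j‖ * δ := by
        intro j hj
        have hjs := Finset.mem_of_mem_erase hj
        have hjm : m < j := lt_of_le_of_ne (Finset.min'_le _ _ hjs)
          (Ne.symm (Finset.ne_of_mem_erase hj))
        have hjM : j ≤ Mx := Finset.le_max' _ _ hjs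
        rw [norm_smul]
        exact mul_le_mul_of_nonneg_left (h2 j hjm hjM).le (norm_nonneg _)
      refine le_trans (Finset.sum_le_sum hterm) ?_
      rw [← Finset.sum_mul]
      refine mul_le_mul_of_nonneg_right ?_ hδ0
      exact Finset.sum_le_sum_of_subset_of_nonneg (Finset.erase_subset _ _)
        (fun _ _ _ => norm_nonneg _)
    have harith : ‖c m‖*δ + ‖c m‖*ε' + Csum*δ < ε := by
      have l1 : ‖c m‖*δ ≤ ‖c m‖*ε' := mul_le_mul_of_nonneg_left hδε'.le (norm_nonneg _)
      have l2 : Csum*δ ≤ Csum*ε' := mul_le_mul_of_nonneg_left hδε'.le hC0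
      have l3 : (2*‖c m‖ + Csum)*ε' < (2*Csum + 2*‖c m‖ + 1)*ε' :=
        mul_lt_mul_of_pos_right (by linarith) hε'
      have l4 : (2*Csum + 2*‖c m‖ + 1)*ε' = ε := by
        rw [he']
        field_simp
      nlinarith
    calc ‖(c m • (B ^ n) (ppow f m) - c m • ((B ^ k) f₀))
        + (c m • ((B ^ k) f₀) - z)
        + ∑ j ∈ c.support.erase m, c j • (B ^ n) (ppow f j)‖
        ≤ ‖c m • (B ^ n) (ppow f m) - c m • ((B ^ k) f₀)‖
          + ‖c m • ((B ^ k) f₀) - z‖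
          + ‖∑ j ∈ c.support.erase m, c j • (B ^ n) (ppow f j)‖ := norm_add₃_le
      _ ≤ ‖c m‖*δ + ‖c m‖*ε' + Csum*δ := by linarith
      _ < ε := harith
end

section
/- With the dyadic tree and weight λ(r→v_i) = θ_n(i)^{-α} as above, fix m₀ ∈ ℕ with p/m₀ < α. Then for every vertex v_i and every integer m ≥ m₀, sup_{N≥1} ∑_{u∈Chi^N(v_i)} |λ(v_i→u)|^{m/p} ≤ ∑_{k=1}^∞ k^{-αm₀/p} < ∞. In particular sup_{u∈Chi^N(v_i)} |λ(v_i→u)| is bounded in N, so B_λ has no hypercyclic algebra on ℓ^p(A). -/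
open Filter Topology
open scoped ENNReal NNReal

/-- Lexicographic position of a word over a two-letter alphabet. -/
def theta (l : List Bool) : ℕ :=
  1 + l.foldl (fun a b => 2 * a + (if b then 1 else 0)) 0

/-- The weight on the dyadic tree determined by `λ(r → v_i) = θ(i)^{-α}`. -/
noncomputable def dyadicWeight (α : ℝ) : List Bool → ℂ :=
  fun u => ((((theta u.dropLast : ℝ) / (theta u : ℝ)) ^ α : ℝ) : ℂ)

private def bstep : ℕ → Bool → ℕ := fun a b => 2 * a + (if b then 1 else 0)
private def bval (l : List Bool) : ℕ := l.foldl bstep 0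
private lemma theta_eq (l : List Bool) : theta l = 1 + bval l := rfl
private lemma bfoldl : ∀ (y : List Bool) (a : ℕ),
    y.foldl bstep a = 2 ^ y.length * a + y.foldl bstep 0
  | [], a => by simp [bstep]
  | b :: t, a => by
    have h1 := bfoldl t (bstep a b)
    have h2 := bfoldl t (bstep 0 b)
    simp only [List.foldl_cons, List.length_cons]
    rw [h1, h2]
    cases b <;> simp [bstep] <;> ring
private lemma bval_append (x y : List Bool) :
    bval (x ++ y) = 2 ^ y.length * bval x + bval y := by
  rw [bval, List.foldl_append]; exact bfoldl y (x.foldl bstep 0)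
private lemma theta_pos (l : List Bool) : 0 < theta l := by rw [theta_eq]; omega

private lemma theta_dropLast_le (u : List Bool) : theta u.dropLast ≤ theta u := by
  rcases List.eq_nil_or_concat u with rfl | ⟨x, b, rfl⟩
  · simp
  · rw [List.concat_eq_append, List.dropLast_concat]
    simp only [theta_eq, bval_append, List.length_singleton, pow_one]
    omega

private lemma norm_dyadicWeight_le (α : ℝ) (hα : 0 ≤ α) (u : List Bool) :
    ‖dyadicWeight α u‖ ≤ 1 := by
  rw [dyadicWeight, Complex.norm_real, Real.norm_eq_abs]
  have h1 : (0:ℝ) < (theta u : ℝ) := by exact_mod_cast theta_pos u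
  have hr : (0:ℝ) ≤ ((theta u.dropLast : ℝ) / (theta u : ℝ)) ^ α :=
    Real.rpow_nonneg (by positivity) _
  rw [abs_of_nonneg hr]
  apply Real.rpow_le_one (by positivity) _ hα
  rw [div_le_one h1]
  exact_mod_cast theta_dropLast_le u

private lemma bval_cons (b : Bool) (t : List Bool) :
    bval (b :: t) = 2 ^ t.length * (if b then 1 else 0) + bval t := by
  have := bfoldl t (bstep 0 b); simpa [bval, bstep] using this
private lemma bval_lt (l : List Bool) : bval l < 2 ^ l.length := by
  induction l with
  | nil => simp [bval, bstep]
  | cons b t ih =>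
    rw [bval_cons]; simp only [List.length_cons, pow_succ]
    cases b <;> simp <;> omega
private lemma bval_inj : ∀ (l₁ l₂ : List Bool), l₁.length = l₂.length →
    bval l₁ = bval l₂ → l₁ = l₂
  | [], [], _, _ => rfl
  | [], _ :: _, h, _ => by simp at h
  | _ :: _, [], h, _ => by simp at h
  | b₁ :: t₁, b₂ :: t₂, h, hv => by
    simp only [List.length_cons, Nat.add_right_cancel_iff] at h
    rw [bval_cons, bval_cons, h] at hv
    have k1 := bval_lt t₁
    have k2 := bval_lt t₂
    rw [h] at k1
    have hb : b₁ = b₂ ∧ bval t₁ = bval t₂ := by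
      cases b₁ <;> cases b₂ <;> simp_all <;> omega
    rw [hb.1, bval_inj t₁ t₂ h hb.2]

private lemma theta_mul_le (x y : List Bool) : theta x * theta y ≤ theta (x ++ y) := by
  have hy := bval_lt y
  simp only [theta_eq, bval_append]
  have h1 : bval x * (bval y + 1) ≤ bval x * 2 ^ y.length := Nat.mul_le_mul_left _ hy
  nlinarith

private lemma theta_le_append (x y : List Bool) : theta x ≤ theta (x ++ y) := by
  calc theta x = theta x * 1 := (mul_one _).symm
  _ ≤ theta x * theta y := Nat.mul_le_mul_left _ (theta_pos y)
  _ ≤ theta (x ++ y) := theta_mul_le x y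


/-- On the dyadic tree with weight `λ(r→v_i) = θ_n(i)^{-α}`, if
`m₀ ∈ ℕ` satisfies `p/m₀ < α` then for every vertex `v_i` and every `m ≥ m₀`,
`sup_N ∑_{u ∈ Chi^N(v_i)} |λ(v_i→u)|^{m/p} ≤ ∑_{k≥1} k^{-αm₀/p} < ∞`. In particular
`sup_{u ∈ Chi^N(v_i)} |λ(v_i→u)|` is bounded in `N`, and the induced weighted backward
shift on `ℓ^p` of the dyadic tree has no hypercyclic algebra (for the coordinatewise
product). -/
theorem stmt14 (p : ℝ≥0∞) [Fact (1 ≤ p)] (hp1 : 1 < p) (hp2 : p ≠ ∞)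
    (α : ℝ) (hα1 : 0 < α) (m₀ : ℕ) (hm₀ : 0 < m₀) (hm₀α : p.toReal / (m₀ : ℝ) < α) :
    Summable (fun k : ℕ => ((k : ℝ) + 1) ^ (-(α * (m₀ : ℝ) / p.toReal))) ∧
    (∀ (i : List Bool) (m : ℕ), m₀ ≤ m → ∀ N : ℕ,
      ∑ j : Fin N → Bool,
          ((theta i : ℝ) / (theta (i ++ List.ofFn j) : ℝ)) ^ (α * (m : ℝ) / p.toReal)
        ≤ ∑' k : ℕ, ((k : ℝ) + 1) ^ (-(α * (m₀ : ℝ) / p.toReal))) ∧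
    (∀ i : List Bool, ∃ C : ℝ, ∀ (N : ℕ) (j : Fin N → Bool),
      ((theta i : ℝ) / (theta (i ++ List.ofFn j) : ℝ)) ^ α ≤ C) ∧
    (∀ T : DirTree (List Bool), T.root = [] → T.par = List.dropLast →
      ∀ B : lp (fun _ : List Bool => ℂ) p →L[ℂ] lp (fun _ : List Bool => ℂ) p,
        T.IsWBS (dyadicWeight α) B →
        ¬ ∃ S : Set (lp (fun _ : List Bool => ℂ) p),
            (∃ f ∈ S, f ≠ 0) ∧
            (∀ f ∈ S, ∀ g ∈ S, f + g ∈ S) ∧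
            (∀ c : ℂ, ∀ f ∈ S, c • f ∈ S) ∧
            (∀ f ∈ S, ∀ g ∈ S, ∃ h ∈ S, ∀ v : List Bool,
              (h : ∀ _ : List Bool, ℂ) v
                = (f : ∀ _ : List Bool, ℂ) v * (g : ∀ _ : List Bool, ℂ) v) ∧
            (∀ f ∈ S, f ≠ 0 → Dense (Set.range fun n : ℕ => (B ^ n) f))) := by
  have hpt : 0 < p.toReal := ENNReal.toReal_pos (zero_lt_one.trans hp1).ne' hp2
  set s₀ : ℝ := α * (m₀ : ℝ) / p.toReal with hs₀def
  have hs₀ : 1 < s₀ := by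
    rw [hs₀def, lt_div_iff₀ hpt, one_mul]
    have hm₀' : (0:ℝ) < (m₀ : ℝ) := by exact_mod_cast hm₀
    rw [div_lt_iff₀ hm₀'] at hm₀α
    linarith [hm₀α]
  have hsummable : Summable (fun k : ℕ => ((k : ℝ) + 1) ^ (-s₀)) := by
    have h1 : Summable (fun n : ℕ => (n : ℝ) ^ (-s₀)) :=
      Real.summable_nat_rpow.2 (by linarith)
    have h2 := (summable_nat_add_iff 1).2 h1
    refine h2.congr fun n => ?_
    push_cast
    rfl
  refine ⟨hsummable, ?_, ?_, ?_⟩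
  · intro i m hm N
    set s : ℝ := α * (m : ℝ) / p.toReal with hsdef
    have hss : s₀ ≤ s := by
      rw [hs₀def, hsdef]
      gcongr <;> first | positivity | exact_mod_cast hm
    have hs₀0 : (0:ℝ) ≤ s₀ := by linarith
    -- termwise bound
    have hterm : ∀ j : Fin N → Bool,
        ((theta i : ℝ) / (theta (i ++ List.ofFn j) : ℝ)) ^ s
          ≤ ((bval (List.ofFn j) : ℝ) + 1) ^ (-s₀) := by
      intro j
      set w := List.ofFn j with hw
      have ha : (0:ℝ) < (theta i : ℝ) := by exact_mod_cast theta_pos i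
      have hb : (0:ℝ) < (theta (i ++ w) : ℝ) := by exact_mod_cast theta_pos (i ++ w)
      have hc : (0:ℝ) < (theta w : ℝ) := by exact_mod_cast theta_pos w
      have hkey : (theta i : ℝ) * (theta w : ℝ) ≤ (theta (i ++ w) : ℝ) := by
        exact_mod_cast theta_mul_le i w
      have hle1 : (theta i : ℝ) / (theta (i ++ w) : ℝ) ≤ 1 := by
        rw [div_le_one hb]
        exact_mod_cast theta_le_append i w
      have hpos : (0:ℝ) < (theta i : ℝ) / (theta (i ++ w) : ℝ) := by positivity
      have hratio : (theta i : ℝ) / (theta (i ++ w) : ℝ) ≤ 1 / (theta w : ℝ) := by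
        rw [div_le_div_iff₀ hb hc]
        linarith [hkey]
      have hcval : ((theta w : ℕ) : ℝ) = (bval w : ℝ) + 1 := by
        rw [theta_eq]; push_cast; ring
      calc ((theta i : ℝ) / (theta (i ++ w) : ℝ)) ^ s
          ≤ ((theta i : ℝ) / (theta (i ++ w) : ℝ)) ^ s₀ :=
            Real.rpow_le_rpow_of_exponent_ge hpos hle1 hss
        _ ≤ (1 / (theta w : ℝ)) ^ s₀ :=
            Real.rpow_le_rpow hpos.le hratio hs₀0
        _ = ((theta w : ℝ)) ^ (-s₀) := by
            rw [one_div, Real.inv_rpow hc.le, ← Real.rpow_neg hc.le]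
        _ = ((bval w : ℝ) + 1) ^ (-s₀) := by rw [← hcval]
    refine (Finset.sum_le_sum fun j _ => hterm j).trans ?_
    have hinj : ∀ x ∈ (Finset.univ : Finset (Fin N → Bool)), ∀ y ∈ Finset.univ,
        bval (List.ofFn x) = bval (List.ofFn y) → x = y := by
      intro x _ y _ hxy
      exact List.ofFn_injective (bval_inj _ _ (by simp) hxy)
    rw [← Finset.sum_image (g := fun j : Fin N → Bool => bval (List.ofFn j))
      (f := fun k : ℕ => ((k:ℝ)+1) ^ (-s₀)) hinj]
    exact Summable.sum_le_tsum _ (fun k _ => Real.rpow_nonneg (by positivity) _) hsummable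
  · intro i
    refine ⟨1, fun N j => ?_⟩
    have hb : (0:ℝ) < (theta (i ++ List.ofFn j) : ℝ) := by
      exact_mod_cast theta_pos (i ++ List.ofFn j)
    apply Real.rpow_le_one (by positivity) _ hα1.le
    rw [div_le_one hb]
    exact_mod_cast theta_le_append i (List.ofFn j)
  · intro T hroot hpar B hB
    rintro ⟨S, ⟨f, hfS, hf0⟩, -, -, hSprod, hShc⟩
    have hpt : 0 < p.toReal := ENNReal.toReal_pos (zero_lt_one.trans hp1).ne' hp2
    -- the children sets
    have hchi : ∀ v : List Bool,
        T.chi v = (({v ++ [false], v ++ [true]} : Finset (List Bool)) : Set (List Bool)) := by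
      intro v
      ext u
      simp only [DirTree.chi, hroot, hpar, Set.mem_setOf_eq, Finset.coe_insert,
        Finset.coe_singleton, Set.mem_insert_iff, Set.mem_singleton_iff]
      constructor
      · rintro ⟨hne, hdl⟩
        have hu := List.dropLast_append_getLast hne
        rw [hdl] at hu
        cases hlast : u.getLast hne
        · left; rw [← hu, hlast]
        · right; rw [← hu, hlast]
      · rintro (rfl | rfl) <;> exact ⟨by simp, List.dropLast_concat⟩
    have hne2 : ∀ v : List Bool, v ++ [false] ≠ v ++ [true] := by simp
    -- one-step bound
    have hstep : ∀ (g : lp (fun _ : List Bool => ℂ) p) (v : List Bool),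
        ‖(g : ∀ _ : List Bool, ℂ) v‖ = ‖(g : ∀ _ : List Bool, ℂ) v‖ := fun _ _ => rfl
    have hstep : ∀ (g : lp (fun _ : List Bool => ℂ) p) (v : List Bool),
        ‖(B g : ∀ _ : List Bool, ℂ) v‖
          ≤ ‖(g : ∀ _ : List Bool, ℂ) (v ++ [false])‖ + ‖(g : ∀ _ : List Bool, ℂ) (v ++ [true])‖ := by
      intro g v
      rw [hB g v, hchi v, Finset.tsum_subtype'
        ({v ++ [false], v ++ [true]} : Finset (List Bool))
        (fun u => dyadicWeight α u * (g : ∀ _ : List Bool, ℂ) u),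
        Finset.sum_pair (hne2 v)]
      refine (norm_add_le _ _).trans ?_
      gcongr <;>
      · rw [norm_mul]
        calc ‖dyadicWeight α _‖ * ‖(g : ∀ _ : List Bool, ℂ) _‖
            ≤ 1 * ‖(g : ∀ _ : List Bool, ℂ) _‖ := by
              gcongr; exact norm_dyadicWeight_le α hα1.le _
          _ = _ := one_mul _
    -- iterated bound
    have hiter : ∀ (n : ℕ) (g : lp (fun _ : List Bool => ℂ) p) (v : List Bool),
        ‖((B ^ n) g : ∀ _ : List Bool, ℂ) v‖
          ≤ ∑ j : Fin n → Bool, ‖(g : ∀ _ : List Bool, ℂ) (v ++ List.ofFn j)‖ := by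
      intro n
      induction n with
      | zero =>
        intro g v
        rw [pow_zero, ContinuousLinearMap.one_apply,
          Fintype.sum_subsingleton _ (fun i : Fin 0 => i.elim0)]
        simp
      | succ n ih =>
        intro g v
        have h1 : ((B ^ (n+1)) g) = B ((B ^ n) g) := by
          rw [pow_succ']; rfl
        rw [h1]
        refine (hstep ((B ^ n) g) v).trans ?_
        refine (add_le_add (ih g (v ++ [false])) (ih g (v ++ [true]))).trans (le_of_eq ?_)
        have hsplit : ∑ j : Fin (n+1) → Bool, ‖(g : ∀ _ : List Bool, ℂ) (v ++ List.ofFn j)‖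
            = ∑ x : Bool × (Fin n → Bool),
                ‖(g : ∀ _ : List Bool, ℂ) (v ++ List.ofFn (Fin.cons x.1 x.2 : Fin (n+1) → Bool))‖ := by
          refine (Fintype.sum_equiv (Fin.consEquiv (fun _ => Bool)) _ _ fun x => ?_).symm
          rfl
        rw [hsplit, Fintype.sum_prod_type, Fintype.sum_bool, add_comm]
        congr 1 <;>
        · refine Finset.sum_congr rfl fun j _ => ?_
          congr 1
          simp [List.ofFn_succ]
    -- the m-th power of f lies in S
    have hpow : ∀ m : ℕ, 1 ≤ m → ∃ h ∈ S, ∀ v : List Bool,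
        (h : ∀ _ : List Bool, ℂ) v = ((f : ∀ _ : List Bool, ℂ) v) ^ m := by
      intro m hm
      induction m, hm using Nat.le_induction with
      | base => exact ⟨f, hfS, fun v => (pow_one _).symm⟩
      | succ m hm ih =>
        obtain ⟨h, hhS, hh⟩ := ih
        obtain ⟨h', hh'S, hh'⟩ := hSprod h hhS f hfS
        exact ⟨h', hh'S, fun v => by rw [hh' v, hh v, pow_succ]⟩
    -- choose m
    set m : ℕ := max 1 ⌈p.toReal⌉₊ with hmdef
    have hm1 : 1 ≤ m := le_max_left _ _
    have hpm : p ≤ (m : ℝ≥0∞) := by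
      rw [← ENNReal.toReal_le_toReal hp2 (by simp)]
      have : p.toReal ≤ (⌈p.toReal⌉₊ : ℝ) := Nat.le_ceil _
      have h2 : ((⌈p.toReal⌉₊ : ℕ) : ℝ) ≤ ((m : ℕ) : ℝ) := by
        exact_mod_cast le_max_right 1 ⌈p.toReal⌉₊
      simp only [ENNReal.toReal_natCast]
      linarith
    obtain ⟨h, hhS, hh⟩ := hpow m hm1
    -- h is nonzero
    obtain ⟨v₀, hv₀⟩ : ∃ v, (f : ∀ _ : List Bool, ℂ) v ≠ 0 := by
      by_contra hc
      push_neg at hc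
      exact hf0 (lp.ext (funext hc))
    have hh0 : h ≠ 0 := by
      intro hc
      apply hv₀
      have : (h : ∀ _ : List Bool, ℂ) v₀ = 0 := by rw [hc]; rfl
      rw [hh v₀] at this
      exact pow_eq_zero_iff (by omega) |>.mp this
    -- summability of ‖f u‖ ^ m
    have hsum : Summable (fun u : List Bool => ‖(f : ∀ _ : List Bool, ℂ) u‖ ^ m) := by
      have h1 : Memℓp (f : ∀ _ : List Bool, ℂ) (m : ℝ≥0∞) :=
        (lp.memℓp f).of_exponent_ge hpm
      have h2 := h1.summable (by simp; omega)
      refine h2.congr fun u => ?_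
      simp [Real.rpow_natCast]
    set C : ℝ := ∑' u : List Bool, ‖(f : ∀ _ : List Bool, ℂ) u‖ ^ m with hCdef
    have hC0 : 0 ≤ C := tsum_nonneg fun u => by positivity
    -- uniform bound on the orbit of h at the root coordinate
    have hbound : ∀ n : ℕ, ‖((B ^ n) h : ∀ _ : List Bool, ℂ) []‖ ≤ C := by
      intro n
      refine (hiter n h []).trans ?_
      have he : ∀ j : Fin n → Bool, ‖(h : ∀ _ : List Bool, ℂ) ([] ++ List.ofFn j)‖
          = ‖(f : ∀ _ : List Bool, ℂ) (List.ofFn j)‖ ^ m := by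
        intro j; rw [List.nil_append, hh, norm_pow]
      rw [Finset.sum_congr rfl fun j _ => he j]
      have hinj : ∀ x ∈ (Finset.univ : Finset (Fin n → Bool)), ∀ y ∈ Finset.univ,
          List.ofFn x = List.ofFn y → x = y := fun x _ y _ hxy => List.ofFn_injective hxy
      rw [← Finset.sum_image (g := fun j : Fin n → Bool => List.ofFn j)
        (f := fun u : List Bool => ‖(f : ∀ _ : List Bool, ℂ) u‖ ^ m) hinj]
      exact Summable.sum_le_tsum _ (fun u _ => by positivity) hsum
    -- contradiction with density of the orbit of h
    have hdense := hShc h hhS hh0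
    obtain ⟨y, ⟨n, rfl⟩, hd⟩ := hdense.exists_dist_lt
      (lp.single p ([] : List Bool) (((C + 2 : ℝ)) : ℂ)) (by norm_num : (0:ℝ) < 1)
    have hcoord : ‖((B ^ n) h : ∀ _ : List Bool, ℂ) [] - ((C + 2 : ℝ) : ℂ)‖ ≤
        dist ((B ^ n) h) (lp.single p ([] : List Bool) (((C + 2 : ℝ)) : ℂ)) := by
      rw [dist_eq_norm]
      have := lp.norm_apply_le_norm (by
          intro hc; rw [hc] at hp1; exact (not_lt_of_ge (zero_le_one)) (by exact_mod_cast hp1))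
        ((B ^ n) h - lp.single p ([] : List Bool) (((C + 2 : ℝ)) : ℂ)) ([] : List Bool)
      rwa [lp.coeFn_sub, Pi.sub_apply, lp.single_apply_self] at this
    have hfinal : (C + 2 : ℝ) ≤ C + 1 := by
      have h1 : ‖((C + 2 : ℝ) : ℂ)‖ = C + 2 := by
        rw [Complex.norm_real, Real.norm_eq_abs, abs_of_nonneg (by linarith)]
      have h2 : ‖((C + 2 : ℝ) : ℂ)‖
          ≤ ‖((B ^ n) h : ∀ _ : List Bool, ℂ) []‖
            + ‖((B ^ n) h : ∀ _ : List Bool, ℂ) [] - ((C + 2 : ℝ) : ℂ)‖ := by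
        have := norm_sub_le (((B ^ n) h : ∀ _ : List Bool, ℂ) [])
          (((B ^ n) h : ∀ _ : List Bool, ℂ) [] - ((C + 2 : ℝ) : ℂ))
        simpa using this
      have h3 := hbound n
      rw [dist_comm] at hd
      have h4 := hcoord.trans hd.le
      linarith
    linarith
end
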